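/- arXiv:1111.2343 — 8 statements merged into one kernel-verified Lean document; each statement's English description precedes it below -/
import Mathlib

section
/- Let X_J be the (n+1)×(n+1) matrix over ℚ whose (i, i+1) entry is 1 for each i ∈ {1, ..., n} \ J and all of whose other entries are 0. Then X_J is nilpotent and for every k ≥ 0, rank(X_J^k) = Σ_{p ∈ P(J)} max(p - k, 0); that is, the Jordan type of X_J is the partition P(J). -/
/-!
With `g t = [t ∉ J]`, `X_J` is the weighted shift with entry `g (a + 1)` at `(a, a + 1)`, so
`X_J ^ k` lives on the `k`-th superdiagonal, with entry `1` at `(a, a + k)` exactly when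
`(a, a + k]` misses `J`. Its nonzero rows are distinct standard basis vectors, so the rank counts
these `a`. The cuts `0 = d_0 < ⋯ < d_r < n + 1` split `{0, …, n}` into blocks `[d_j, d_{j+1})`
whose lengths are the parts `p` of `P(J)`, and in a block of length `p` exactly the first
`p - k` indices qualify.
-/

open Finset

namespace Matrix

variable {R K : Type*}

def superdiag [Zero R] (m i : ℕ) (f : ℕ → R) : Matrix (Fin m) (Fin m) R :=
  of fun a b => if b.val = a.val + i then f a else 0

theorem superdiag_eq_zero [Zero R] {m i : ℕ} (h : m ≤ i) (f : ℕ → R) :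
    superdiag m i f = 0 := by
  ext a b
  simp only [superdiag, of_apply, zero_apply, ite_eq_right_iff]
  omega

theorem superdiag_mul [NonUnitalNonAssocSemiring R] (m i j : ℕ) (f g : ℕ → R) :
    superdiag m i f * superdiag m j g = superdiag m (i + j) fun a => f a * g (a + i) := by
  ext a b
  simp only [superdiag, mul_apply, of_apply]
  by_cases h : a.val + i < m
  · rw [sum_eq_single ⟨a + i, h⟩]
    · simp [← add_assoc]
    · intro c _ hc
      rw [if_neg fun h' => hc (Fin.ext h'), zero_mul]
    · simp
  · rw [if_neg (by omega)]
    refine sum_eq_zero fun c _ => ?_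
    rw [if_neg (by omega), zero_mul]

theorem superdiag_one_pow [CommSemiring R] (m k : ℕ) (g : ℕ → R) :
    superdiag m 1 (fun a => g (a + 1)) ^ k =
      superdiag m k fun a => ∏ t ∈ Ioc a (a + k), g t := by
  induction k with
  | zero =>
    ext a b
    simp [superdiag, one_apply, Fin.ext_iff, eq_comm]
  | succ k ih =>
    rw [pow_succ, ih, superdiag_mul]
    congr! 2 with a
    rw [← add_assoc, prod_Ioc_succ_top (Nat.le_add_right a k)]

theorem rank_eq_card_of_linearIndependent_rows {m n : Type*} [Fintype m] [Fintype n] [Field K]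
    (A : Matrix m n K) (s : Finset m) (hzero : ∀ a ∉ s, A a = 0)
    (hli : LinearIndependent K fun a : s => A a) : A.rank = #s := by
  have hspan : Submodule.span K (Set.range A.row) =
      Submodule.span K (Set.range fun a : s => A a) := by
    refine le_antisymm (Submodule.span_le.2 ?_)
      (Submodule.span_mono (Set.range_comp_subset_range _ _))
    rintro - ⟨a, rfl⟩
    by_cases ha : a ∈ s
    · exact Submodule.subset_span ⟨⟨a, ha⟩, rfl⟩
    · rw [row, hzero a ha]
      exact Submodule.zero_mem _
  rw [rank_eq_finrank_span_row, hspan, finrank_span_eq_card hli, Fintype.card_coe]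

theorem rank_superdiag [Field K] [DecidableEq K] (m i : ℕ) (f : ℕ → K) :
    (superdiag m i f).rank = #{a ∈ range (m - i) | f a ≠ 0} := by
  let s : Finset (Fin m) := {a | a.val + i < m ∧ f a ≠ 0}
  let σ : s → Fin m := fun a => ⟨a.1 + i, (mem_filter.1 a.2).2.1⟩
  have hσ : Function.Injective σ := fun a b h =>
    Subtype.ext <| Fin.ext <| Nat.add_right_cancel (congrArg Fin.val h)
  have hrow : ∀ a : s, superdiag m i f a = f a • Pi.single (σ a) 1 := fun a => by
    ext b
    rw [Pi.smul_apply, Pi.single_apply, smul_eq_mul, mul_ite, mul_one, mul_zero]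
    simp only [superdiag, of_apply, σ, Fin.ext_iff]
  rw [rank_eq_card_of_linearIndependent_rows _ s]
  · refine card_bij (fun a _ => a.val) (fun a ha => ?_) (fun a _ b _ h => Fin.ext h) fun a ha => ?_
    · simp only [s, mem_filter, mem_univ, true_and] at ha
      simp only [mem_filter, mem_range]
      exact ⟨by omega, ha.2⟩
    · simp only [mem_filter, mem_range] at ha
      exact ⟨⟨a, by omega⟩, by simpa [s] using ⟨by omega, ha.2⟩, rfl⟩
  · intro a ha
    ext b
    simp only [s, mem_filter, mem_univ, true_and, not_and_or, not_lt, not_not] at ha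
    simp only [superdiag, of_apply, Pi.zero_apply, ite_eq_right_iff]
    intro hb
    exact ha.resolve_left (by omega)
  · simp_rw [hrow]
    exact ((Pi.linearIndependent_single_one (Fin m) K).comp σ hσ).units_smul
      fun a => Units.mk0 (f a) (mem_filter.1 a.2).2.2

end Matrix

theorem Finset.sum_range_eq_sum_sum_Ico {M : Type*} [AddCommMonoid M] (f : ℕ → M)
    {e : ℕ → ℕ} (he0 : e 0 = 0) {j : ℕ} (he : ∀ i < j, e i ≤ e (i + 1)) :
    ∑ a ∈ range (e j), f a = ∑ i ∈ range j, ∑ a ∈ Ico (e i) (e (i + 1)), f a := by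
  induction j with
  | zero => simp [he0]
  | succ j ih =>
    rw [sum_range_succ, ← ih fun i hi => he i (by omega),
      sum_range_add_sum_Ico _ (he j j.lt_add_one)]

theorem Nat.card_filter_Ico_disjoint_Ioc {C : Finset ℕ} {lo hi : ℕ} (k : ℕ) (hhi : hi ∈ C)
    (hgap : ∀ c ∈ C, c ≤ lo ∨ hi ≤ c) :
    #{a ∈ Ico lo hi | Disjoint (Ioc a (a + k)) C} = hi - lo - k := by
  suffices {a ∈ Ico lo hi | Disjoint (Ioc a (a + k)) C} = Ico lo (hi - k) by
    rw [this, Nat.card_Ico]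
    omega
  ext a
  simp only [mem_filter, mem_Ico, disjoint_left, mem_Ioc]
  constructor
  · rintro ⟨⟨hlo, hahi⟩, hdisj⟩
    refine ⟨hlo, ?_⟩
    by_contra! h
    exact hdisj ⟨by omega, by omega⟩ hhi
  · rintro ⟨hlo, hk⟩
    refine ⟨⟨hlo, by omega⟩, fun c hc hcC => ?_⟩
    rcases hgap c hcC with h | h <;> omega

theorem Nat.card_filter_range_disjoint_Ioc_image {e : ℕ → ℕ} {j : ℕ} (he0 : e 0 = 0)
    (he_succ : ∀ i < j, e i ≤ e (i + 1)) (k : ℕ) :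
    #{a ∈ range (e j) | Disjoint (Ioc a (a + k)) ((Icc 1 j).image e)} =
      ∑ i ∈ range j, (e (i + 1) - e i - k) := by
  have he : MonotoneOn e (Set.Iic j) :=
    monotoneOn_of_le_succ Set.ordConnected_Iic fun i _ _ hi =>
      by simpa using he_succ i (by simpa using hi)
  rw [card_filter, sum_range_eq_sum_sum_Ico _ he0 he_succ]
  refine sum_congr rfl fun i hi => ?_
  rw [mem_range] at hi
  rw [← card_filter]
  refine Nat.card_filter_Ico_disjoint_Ioc k (mem_image_of_mem e (mem_Icc.2 ⟨by omega, by omega⟩))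
    fun c hc => ?_
  obtain ⟨m, hm, rfl⟩ := mem_image.1 hc
  rw [mem_Icc] at hm
  rcases le_or_gt m i with h | h
  · exact Or.inl (he (Set.mem_Iic.2 (by omega)) (Set.mem_Iic.2 (by omega)) h)
  · exact Or.inr (he (Set.mem_Iic.2 (by omega)) (Set.mem_Iic.2 (by omega)) h)

theorem Nat.card_filter_range_sub_disjoint_Ioc (N k : ℕ) (C : Finset ℕ) :
    #{a ∈ range (N - k) | Disjoint (Ioc a (a + k)) C} =
      #{a ∈ range N | Disjoint (Ioc a (a + k)) (insert N C)} := by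
  congr 1
  ext a
  simp only [mem_filter, mem_range, disjoint_insert_right, mem_Ioc, not_and, not_le]
  constructor
  · rintro ⟨ha, hdisj⟩
    exact ⟨by omega, fun _ => by omega, hdisj⟩
  · rintro ⟨ha, hN, hdisj⟩
    exact ⟨by specialize hN ha; omega, hdisj⟩

theorem Nat.card_filter_disjoint_Ioc_image_eq_sum_gaps {n r : ℕ} {d : ℕ → ℕ} (h0 : d 0 = 0)
    (hmono : ∀ i < r, d i < d (i + 1)) (hdn : d r ≤ n) (k : ℕ) :
    #{a ∈ range (n + 1 - k) | Disjoint (Ioc a (a + k)) ((Icc 1 r).image d)} =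
      (((n + 1 - d r) ::ₘ (Icc 1 r).val.map fun i => d i - d (i - 1)).map (· - k)).sum := by
  let e i := if i ≤ r then d i else n + 1
  have he_succ : ∀ i < r + 1, e i ≤ e (i + 1) := by
    intro i hi
    simp only [e, if_pos (by omega : i ≤ r)]
    split_ifs
    · exact (hmono i (by omega)).le
    · obtain rfl : i = r := by omega
      omega
  have hcuts : (Icc 1 (r + 1)).image e = insert (n + 1) ((Icc 1 r).image d) := by
    rw [← Order.succ_eq_add_one, ← insert_Icc_right_eq_Icc_succ (by simp), image_insert]
    congr 1
    · simp [e]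
    · exact image_congr fun i hi => if_pos (mem_Icc.1 hi).2
  calc _ = #{a ∈ range (e (r + 1)) | Disjoint (Ioc a (a + k)) ((Icc 1 (r + 1)).image e)} := by
        rw [Nat.card_filter_range_sub_disjoint_Ioc, hcuts]
        simp [e]
    _ = ∑ i ∈ range (r + 1), (e (i + 1) - e i - k) :=
        Nat.card_filter_range_disjoint_Ioc_image (by simp [e, h0]) he_succ k
    _ = _ := by
        rw [Multiset.map_cons, Multiset.sum_cons, Multiset.map_map, ← sum_eq_multiset_sum,
          sum_range_succ, add_comm, ← Ico_add_one_right_eq_Icc, sum_Ico_eq_sum_range]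
        congr 1
        · simp [e]
        · refine sum_congr (by simp) fun i hi => ?_
          rw [mem_range] at hi
          simp [e, if_pos (by omega : i ≤ r), if_pos (by omega : i + 1 ≤ r), add_comm 1 i]

theorem stmt_1_general (n r : ℕ)
    (d : ℕ → ℕ) (h0 : d 0 = 0)
    (hmono : ∀ i, i < r → d i < d (i + 1))
    (hdn : d r ≤ n)
    (J : Finset ℕ) (hJ : J = (Finset.Icc 1 r).image d)
    (X : Matrix (Fin (n + 1)) (Fin (n + 1)) ℚ)
    (hX : X = Matrix.of fun k l : Fin (n + 1) =>
      if l.val = k.val + 1 ∧ (k.val + 1) ∉ J then (1 : ℚ) else 0)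
    (P : Multiset ℕ)
    (hP : P = (n + 1 - d r) ::ₘ (Finset.Icc 1 r).val.map fun i => d i - d (i - 1)) :
    IsNilpotent X ∧ ∀ k : ℕ, (X ^ k).rank = (P.map fun p => p - k).sum := by
  let g : ℕ → ℚ := fun t => if t ∉ J then 1 else 0
  have hXg : X = Matrix.superdiag (n + 1) 1 fun a => g (a + 1) := by
    rw [hX]
    ext a b
    simp only [Matrix.superdiag, Matrix.of_apply, g, ite_and]
  have hg : ∀ a k, ∏ t ∈ Ioc a (a + k), g t ≠ 0 ↔ Disjoint (Ioc a (a + k)) J := by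
    intro a k
    rw [prod_ne_zero_iff, disjoint_left]
    simp [g]
  refine ⟨⟨n + 1, ?_⟩, fun k => ?_⟩
  · rw [hXg, Matrix.superdiag_one_pow, Matrix.superdiag_eq_zero le_rfl]
  · rw [hXg, Matrix.superdiag_one_pow, Matrix.rank_superdiag]
    simp_rw [hg, hP, hJ]
    exact Nat.card_filter_disjoint_Ioc_image_eq_sum_gaps h0 hmono hdn k

/-- In type `A_n`: the matrix `X_J` with a 1 in entry `(i, i+1)` (1-based) for each
`i ∈ {1,...,n} \ J` and zeros elsewhere is nilpotent with Jordan type the partition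
`P(J) = [(n+1-d_r) (d_r - d_{r-1}) ... (d_2 - d_1) d_1]`, i.e. for all `k ≥ 0`,
`rank (X_J ^ k) = Σ_{p ∈ P(J)} max (p - k) 0`. -/
theorem stmt_1 (n r : ℕ) (hn : 1 ≤ n)
    (d : ℕ → ℕ) (h0 : d 0 = 0)
    (hmono : ∀ i, i < r → d i < d (i + 1))
    (hdn : d r ≤ n)
    (J : Finset ℕ) (hJ : J = (Finset.Icc 1 r).image d)
    (X : Matrix (Fin (n + 1)) (Fin (n + 1)) ℚ)
    (hX : X = Matrix.of fun k l : Fin (n + 1) =>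
      if l.val = k.val + 1 ∧ (k.val + 1) ∉ J then (1 : ℚ) else 0)
    (P : Multiset ℕ)
    (hP : P = (n + 1 - d r) ::ₘ (Finset.Icc 1 r).val.map fun i => d i - d (i - 1)) :
    IsNilpotent X ∧ ∀ k : ℕ, (X ^ k).rank = (P.map fun p => p - k).sum :=
  stmt_1_general n r d h0 hmono hdn J hJ X hX P hP
end

section
/- Let X_J be the (2n+1)×(2n+1) matrix over ℚ given by X_J = Σ_{i ∈ {1,...,n-1} \ J} (E_{i+1, i+2} - E_{n+i+2, n+i+1}), plus (E_{1, 2n+1} - E_{n+1, 1}) if n ∉ J. Then X_J is nilpotent and for every k ≥ 0, rank(X_J^k) = Σ_{p ∈ P_B(J)} max(p - k, 0); that is, the Jordan type of X_J is the (unreduced) type B_n partition P_B(J) = [(2(n-d_r)+1) (d_r - d_{r-1})^2 ... (d_2 - d_1)^2 d_1^2]. -/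
/-!
With 0-based indices, the support of `X_J` is the graph of an injective partial map `succB` on
`{0, …, 2n}`, so `X_J ^ k` is supported on the graph of the `k`-th iterate of `succB` and its rank
is the number of points at which that iterate is defined. The orbits of `succB` are chains: each
block `(d_{i-1}, d_i]` is walked upwards and its mirror `n + (d_{i-1}, d_i]` downwards, giving two
chains of length `d_i - d_{i-1}`, and the remaining points form the single chain
`d_r + 1 → ⋯ → n → 0 → 2n → ⋯ → n + d_r + 1` of length `2(n - d_r) + 1`. A chain of length `p`
contains `p - k` points from which `k` steps are possible.
-/

open Finset

section PartialMap

variable {ι : Type*}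

def partialIter (f : ι → Option ι) : ℕ → ι → Option ι
  | 0 => some
  | k + 1 => fun x => (f x).bind (partialIter f k)

variable {f : ι → Option ι}

theorem partialIter_injective (hf : ∀ ⦃a b c⦄, f a = some c → f b = some c → a = b) :
    ∀ k ⦃a b c⦄, partialIter f k a = some c → partialIter f k b = some c → a = b
  | 0, a, b, c, ha, hb => by simp_all [partialIter]
  | k + 1, a, b, c, ha, hb => by
    obtain ⟨y, hay, hy⟩ := Option.bind_eq_some_iff.mp ha
    obtain ⟨z, hbz, hz⟩ := Option.bind_eq_some_iff.mp hb
    obtain rfl := partialIter_injective hf k hy hz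
    exact hf hay hbz

theorem isSome_partialIter_iff_le {h : ι → ℕ} (hnone : ∀ x, f x = none → h x = 0)
    (hsome : ∀ x y, f x = some y → h x = h y + 1) :
    ∀ k x, (partialIter f k x).isSome ↔ k ≤ h x
  | 0, x => by simp [partialIter]
  | k + 1, x => by
    cases hx : f x with
    | none => simp [partialIter, hx, hnone x hx]
    | some y =>
      simp only [partialIter, hx, Option.bind_some, isSome_partialIter_iff_le hnone hsome k y,
        hsome x y hx]
      omega

end PartialMap

namespace Matrix

theorem rank_eq_card_row_ne_zero {m n K : Type*} [Fintype m] [Fintype n] [DecidableEq m]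
    [Field K] [DecidableEq K] {M : Matrix m n K}
    (hcol : ∀ i i' j, M i j ≠ 0 → M i' j ≠ 0 → i = i') :
    M.rank = #{i | M.row i ≠ 0} := by
  set S : Finset m := {i | M.row i ≠ 0}
  have hspan : Submodule.span K (Set.range M.row) =
      Submodule.span K (Set.range fun i : S => M i) := by
    refine le_antisymm (Submodule.span_le.mpr ?_) (Submodule.span_mono ?_)
    · rintro _ ⟨i, rfl⟩
      by_cases hi : M.row i = 0
      · simp [hi]
      · exact Submodule.subset_span ⟨⟨i, by simpa [S] using hi⟩, rfl⟩
    · rintro _ ⟨i, rfl⟩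
      exact ⟨i, rfl⟩
  have hli : LinearIndependent K fun i : S => M i := by
    refine linearIndependent_iff'.mpr fun s g hg i hi => ?_
    obtain ⟨j, hj⟩ := Function.ne_iff.mp (mem_filter.mp i.2).2
    have := congrFun hg j
    rw [Finset.sum_apply, Finset.sum_eq_single i (fun i' _ hi' => ?_) (by simp [hi])] at this
    · simp only [Pi.smul_apply, smul_eq_mul] at this
      exact (mul_eq_zero.mp this).resolve_right hj
    · simp only [Pi.smul_apply, smul_eq_mul, mul_eq_zero]
      exact .inr (not_not.mp fun h => hi' (Subtype.ext (hcol _ _ _ h hj)))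
  rw [rank_eq_finrank_span_row, hspan, finrank_span_eq_card hli, Fintype.card_coe]

variable {ι R : Type*} [Fintype ι] [DecidableEq ι] {f : ι → Option ι}

theorem pow_apply_ne_zero_iff [Semiring R] [NoZeroDivisors R] [Nontrivial R] {M : Matrix ι ι R}
    (hM : ∀ i j, M i j ≠ 0 ↔ f i = some j) :
    ∀ k i j, (M ^ k) i j ≠ 0 ↔ partialIter f k i = some j
  | 0, i, j => by
    rcases eq_or_ne i j with rfl | hij
    · simp [partialIter]
    · simp [partialIter, one_apply_ne hij, hij]
  | k + 1, i, j => by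
    have hrow : ∀ m, M i m * (M ^ k) m j ≠ 0 ↔ f i = some m ∧ partialIter f k m = some j :=
      fun m => by rw [mul_ne_zero_iff, hM, pow_apply_ne_zero_iff hM k]
    rw [pow_succ', mul_apply]
    cases hfi : f i with
    | none =>
      simp only [hfi, reduceCtorEq, false_and, iff_false, not_not] at hrow
      simp [Finset.sum_eq_zero fun m _ => hrow m, partialIter, hfi]
    | some y =>
      rw [Finset.sum_eq_single y (fun m _ hmy => not_not.mp fun h => hmy ?_) (by simp), hrow]
      · simp [partialIter, hfi]
      · simpa [hfi] using ((hrow m).mp h).1.symm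

theorem rank_eq_card_isSome {K : Type*} [Field K] [DecidableEq K] {M : Matrix ι ι K}
    (hM : ∀ i j, M i j ≠ 0 ↔ f i = some j)
    (hf : ∀ ⦃a b c⦄, f a = some c → f b = some c → a = b) :
    M.rank = #{i | (f i).isSome} := by
  rw [rank_eq_card_row_ne_zero fun i i' j hi hi' => hf ((hM i j).mp hi) ((hM i' j).mp hi')]
  congr 1
  ext i
  simp [Option.isSome_iff_exists, ← hM, Function.ne_iff]

end Matrix

theorem sum_Ico_ite_le_sub_right {h : ℕ → ℕ} {a b c : ℕ} (k : ℕ) (hb : b ≤ c + 1)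
    (hh : ∀ x ∈ Ico a b, h x = c - x) :
    ∑ x ∈ Ico a b, (if k ≤ h x then 1 else 0) = min b (c + 1 - k) - a := by
  have hiff : ∀ x ∈ Ico a b, k ≤ h x ↔ x < c + 1 - k := fun x hx => by
    rw [hh x hx]; rw [mem_Ico] at hx; omega
  rw [sum_congr rfl fun x hx => if_congr (hiff x hx) rfl rfl, sum_boole, Ico_filter_lt,
    Nat.card_Ico, Nat.cast_id]

theorem sum_Ico_ite_le_sub_left {h : ℕ → ℕ} {a b c : ℕ} (k : ℕ) (hc : c ≤ a)
    (hh : ∀ x ∈ Ico a b, h x = x - c) :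
    ∑ x ∈ Ico a b, (if k ≤ h x then 1 else 0) = b - max a (c + k) := by
  have hiff : ∀ x ∈ Ico a b, k ≤ h x ↔ c + k ≤ x := fun x hx => by
    rw [hh x hx]; rw [mem_Ico] at hx; omega
  rw [sum_congr rfl fun x hx => if_congr (hiff x hx) rfl rfl, sum_boole, Ico_filter_le,
    Nat.card_Ico, Nat.cast_id]

theorem sum_Ico_eq_sum_Icc_sum_Ico {M : Type*} [AddCommMonoid M] (F : ℕ → M) {e : ℕ → ℕ} :
    ∀ {m : ℕ}, MonotoneOn e (Set.Iic m) →
      ∑ x ∈ Ico (e 0) (e m), F x = ∑ i ∈ Icc 1 m, ∑ x ∈ Ico (e (i - 1)) (e i), F x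
  | 0, _ => by simp
  | m + 1, he => by
    have hle : ∀ {i j}, i ≤ j → j ≤ m + 1 → e i ≤ e j := fun hij hj =>
      he (Set.mem_Iic.mpr (hij.trans hj)) (Set.mem_Iic.mpr hj) hij
    rw [← sum_Ico_consecutive F (hle (Nat.zero_le m) m.le_succ) (hle m.le_succ le_rfl),
      sum_Ico_eq_sum_Icc_sum_Ico F (he.mono (Set.Iic_subset_Iic.mpr m.le_succ)),
      sum_Icc_succ_top (by omega), Nat.add_sub_cancel]

section Support

variable {n : ℕ} {J : Finset ℕ}

def succB (n : ℕ) (J : Finset ℕ) (x : ℕ) : Option ℕ :=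
  if 1 ≤ x ∧ x ≤ n - 1 ∧ x ∉ J then some (x + 1)
  else if n + 2 ≤ x ∧ x ≤ 2 * n ∧ x - 1 - n ∉ J then some (x - 1)
  else if n ∉ J ∧ x = 0 then some (2 * n)
  else if n ∉ J ∧ x = n then some 0
  else none

theorem succB_lt {x y : ℕ} (h : succB n J x = some y) : y < 2 * n + 1 := by
  unfold succB at h
  split_ifs at h <;> cases h <;> omega

theorem succB_injective ⦃a b c : ℕ⦄ (ha : succB n J a = some c) (hb : succB n J b = some c) :
    a = b := by
  unfold succB at ha hb
  grind

def succBFin (n : ℕ) (J : Finset ℕ) (i : Fin (2 * n + 1)) : Option (Fin (2 * n + 1)) :=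
  (succB n J i).pmap Fin.mk fun _ => succB_lt

theorem succBFin_eq_some_iff {i j : Fin (2 * n + 1)} :
    succBFin n J i = some j ↔ succB n J i = some j := by
  rw [succBFin, Option.pmap_eq_some_iff]
  constructor
  · rintro ⟨_, _, h, rfl⟩
    exact h
  · exact fun h => ⟨j, j.2, h, rfl⟩

theorem succBFin_injective ⦃a b c : Fin (2 * n + 1)⦄ (ha : succBFin n J a = some c)
    (hb : succBFin n J b = some c) : a = b :=
  Fin.ext (succB_injective (succBFin_eq_some_iff.mp ha) (succBFin_eq_some_iff.mp hb))

theorem succBFin_eq_none_iff {i : Fin (2 * n + 1)} :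
    succBFin n J i = none ↔ succB n J i = none :=
  Option.pmap_eq_none_iff

def entryB (n : ℕ) (J : Finset ℕ) (a b : ℕ) : ℚ :=
  (if b = a + 1 ∧ 1 ≤ a ∧ a ≤ n - 1 ∧ a ∉ J then 1 else 0)
    - (if a = b + 1 ∧ n + 1 ≤ b ∧ b ≤ 2 * n - 1 ∧ b - n ∉ J then 1 else 0)
    + (if n ∉ J ∧ a = 0 ∧ b = 2 * n then 1 else 0)
    - (if n ∉ J ∧ a = n ∧ b = 0 then 1 else 0)

theorem entryB_ne_zero_iff (hn : 1 ≤ n) (a b : ℕ) :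
    entryB n J a b ≠ 0 ↔ succB n J a = some b := by
  unfold entryB succB
  grind

end Support

section Flag

variable {r : ℕ} {d : ℕ → ℕ}

theorem mem_image_Icc_iff (h0 : d 0 = 0) {x : ℕ} (hx : 1 ≤ x) :
    x ∈ (Icc 1 r).image d ↔ ∃ j ≤ r, d j = x := by
  simp only [mem_image, mem_Icc]
  constructor
  · rintro ⟨j, ⟨-, hj⟩, rfl⟩
    exact ⟨j, hj, rfl⟩
  · rintro ⟨j, hj, rfl⟩
    refine ⟨j, ⟨Nat.one_le_iff_ne_zero.mpr ?_, hj⟩, rfl⟩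
    rintro rfl
    omega

theorem exists_block (h0 : d 0 = 0) {x : ℕ} (hx : 1 ≤ x) (hxr : x ≤ d r) :
    ∃ i, 1 ≤ i ∧ i ≤ r ∧ d (i - 1) < x ∧ x ≤ d i := by
  classical
  have hex : ∃ i, x ≤ d i := ⟨r, hxr⟩
  have hpos : 1 ≤ Nat.find hex := Nat.one_le_iff_ne_zero.mpr fun h => by
    have := Nat.find_spec hex
    rw [h, h0] at this
    omega
  refine ⟨Nat.find hex, hpos, Nat.find_min' hex hxr, ?_, Nat.find_spec hex⟩
  exact not_le.mp (Nat.find_min hex (by omega))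

theorem le_of_mem_image_Icc (hd : StrictMonoOn d (Set.Iic r)) {x : ℕ}
    (hx : x ∈ (Icc 1 r).image d) : x ≤ d r := by
  obtain ⟨j, hj, rfl⟩ := mem_image.mp hx
  exact hd.monotoneOn (Set.mem_Iic.mpr (mem_Icc.mp hj).2) (Set.mem_Iic.mpr le_rfl) (mem_Icc.mp hj).2

def blockIdx (r : ℕ) (d : ℕ → ℕ) (x : ℕ) : ℕ :=
  Nat.find (⟨r, .inr le_rfl⟩ : ∃ i, x ≤ d i ∨ r ≤ i)

theorem blockIdx_le (x : ℕ) : blockIdx r d x ≤ r :=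
  Nat.find_min' _ (.inr le_rfl)

theorem blockIdx_eq (hd : StrictMonoOn d (Set.Iic r)) {i x : ℕ} (hi : 1 ≤ i) (hir : i ≤ r)
    (hlo : d (i - 1) < x) (hhi : x ≤ d i) : blockIdx r d x = i := by
  refine (Nat.find_eq_iff _).mpr ⟨.inl hhi, fun j hj => ?_⟩
  have : d j ≤ d (i - 1) :=
    (hd.le_iff_le (Set.mem_Iic.mpr (by omega)) (Set.mem_Iic.mpr (by omega))).mpr (by omega)
  omega

end Flag

-- The number of steps `succB` can still take from `x`, read off the chains described above.
def height (n r : ℕ) (d : ℕ → ℕ) (x : ℕ) : ℕ :=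
  if x = 0 then n - d r
  else if x ≤ d r then d (blockIdx r d x) - x
  else if x ≤ n then 2 * n - d r + 1 - x
  else if x ≤ n + d r then x - n - d (blockIdx r d (x - n) - 1) - 1
  else x - n - d r - 1

section Height

variable {n r : ℕ} {d : ℕ → ℕ}

theorem height_zero : height n r d 0 = n - d r := rfl

theorem height_lowerBlock (hd : StrictMonoOn d (Set.Iic r)) {i x : ℕ} (hi : 1 ≤ i)
    (hir : i ≤ r) (hlo : d (i - 1) < x) (hhi : x ≤ d i) : height n r d x = d i - x := by
  have : d i ≤ d r := hd.monotoneOn (Set.mem_Iic.mpr hir) (Set.mem_Iic.mpr le_rfl) hir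
  rw [height, if_neg (by omega), if_pos (by omega), blockIdx_eq hd hi hir hlo hhi]

theorem height_lowerTail {x : ℕ} (h1 : d r < x) (h2 : x ≤ n) :
    height n r d x = 2 * n - d r + 1 - x := by
  rw [height, if_neg (by omega), if_neg (by omega), if_pos h2]

theorem height_upperBlock (hd : StrictMonoOn d (Set.Iic r)) (hdn : d r ≤ n) {i x : ℕ}
    (hi : 1 ≤ i) (hir : i ≤ r) (hlo : n + d (i - 1) < x) (hhi : x ≤ n + d i) :
    height n r d x = x - n - d (i - 1) - 1 := by
  have : d i ≤ d r := hd.monotoneOn (Set.mem_Iic.mpr hir) (Set.mem_Iic.mpr le_rfl) hir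
  rw [height, if_neg (by omega), if_neg (by omega), if_neg (by omega), if_pos (by omega),
    blockIdx_eq hd hi hir (by omega) (by omega)]

theorem height_upperTail {x : ℕ} (h : n + d r < x) :
    height n r d x = x - n - d r - 1 := by
  rw [height, if_neg (by omega), if_neg (by omega), if_neg (by omega), if_neg (by omega)]

theorem height_d_eq_zero (hd : StrictMonoOn d (Set.Iic r)) {j : ℕ} (hj : 1 ≤ j)
    (hjr : j ≤ r) : height n r d (d j) = 0 := by
  rw [height_lowerBlock hd hj hjr (hd (Set.mem_Iic.mpr (by omega)) (Set.mem_Iic.mpr hjr)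
    (by omega)) le_rfl, Nat.sub_self]

theorem height_add_d_add_one_eq_zero (hd : StrictMonoOn d (Set.Iic r)) (hdn : d r ≤ n)
    {j : ℕ} (hjr : j ≤ r) : height n r d (n + (d j + 1)) = 0 := by
  rcases hjr.lt_or_eq with hjr | rfl
  · have := hd (Set.mem_Iic.mpr hjr.le) (Set.mem_Iic.mpr hjr) (Nat.lt_succ_self j)
    rw [height_upperBlock hd hdn (Nat.le_add_left 1 j) hjr (by simp) (by simp; omega)]
    simp
  · rw [height_upperTail (by omega)]
    omega

theorem height_eq_add_one_of_succB_eq_some (h0 : d 0 = 0) (hd : StrictMonoOn d (Set.Iic r))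
    (hdn : d r ≤ n) (hr : 1 ≤ r) {x y : ℕ}
    (h : succB n ((Icc 1 r).image d) x = some y) : height n r d x = height n r d y + 1 := by
  have hdrJ : d r ∈ (Icc 1 r).image d := mem_image_of_mem d (mem_Icc.mpr ⟨hr, le_rfl⟩)
  unfold succB at h
  split_ifs at h with h1 h2 h3 h4 <;> obtain rfl := Option.some.inj h
  · obtain ⟨hx1, hxn, hxJ⟩ := h1
    rcases le_or_gt x (d r) with hxr | hxr
    · obtain ⟨i, hi1, hir, hlo, hhi⟩ := exists_block h0 hx1 hxr
      have : x ≠ d i := fun h => hxJ ((mem_image_Icc_iff h0 hx1).mpr ⟨i, hir, h.symm⟩)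
      rw [height_lowerBlock hd hi1 hir hlo hhi, height_lowerBlock hd hi1 hir (by omega) (by omega)]
      omega
    · rw [height_lowerTail hxr (by omega), height_lowerTail (by omega) (by omega)]
      omega
  · obtain ⟨hx1, hx2, hxJ⟩ := h2
    rcases le_or_gt (x - n) (d r) with hxr | hxr
    · obtain ⟨i, hi1, hir, hlo, hhi⟩ := exists_block h0 (by omega) hxr
      have : x - 1 - n ≠ d (i - 1) := fun h =>
        hxJ ((mem_image_Icc_iff h0 (by omega)).mpr ⟨i - 1, by omega, h.symm⟩)
      rw [height_upperBlock hd hdn hi1 hir (by omega) (by omega),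
        height_upperBlock hd hdn hi1 hir (by omega) (by omega)]
      omega
    · have : x - 1 - n ≠ d r := fun h => hxJ (h ▸ hdrJ)
      rw [height_upperTail (by omega), height_upperTail (by omega)]
      omega
  · obtain ⟨hnJ, rfl⟩ := h3
    have : d r ≠ n := fun h => hnJ (h ▸ hdrJ)
    rw [height_zero, height_upperTail (by omega)]
    omega
  · obtain ⟨hnJ, hx⟩ := h4
    subst x
    have : d r ≠ n := fun h => hnJ (h ▸ hdrJ)
    rw [height_zero, height_lowerTail (by omega) le_rfl]
    omega

theorem height_eq_zero_of_succB_eq_none (h0 : d 0 = 0) (hd : StrictMonoOn d (Set.Iic r))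
    (hdn : d r ≤ n) {x : ℕ} (hx : x ≤ 2 * n)
    (h : succB n ((Icc 1 r).image d) x = none) : height n r d x = 0 := by
  unfold succB at h
  split_ifs at h with h1 h2 h3 h4
  rcases Nat.eq_zero_or_pos x with rfl | hx0
  · have := le_of_mem_image_Icc hd (not_not.mp fun hn => h3 ⟨hn, rfl⟩)
    rw [height_zero]
    omega
  rcases le_or_gt x n with hxn | hxn
  · have hxJ : x ∈ (Icc 1 r).image d := by
      by_contra hxJ
      rcases (show x ≤ n - 1 ∨ x = n by omega) with hx | rfl
      exacts [h1 ⟨hx0, hx, hxJ⟩, h4 ⟨hxJ, rfl⟩]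
    obtain ⟨j, hj, rfl⟩ := (mem_image_Icc_iff h0 hx0).mp hxJ
    exact height_d_eq_zero hd (Nat.one_le_iff_ne_zero.mpr (by rintro rfl; omega)) hj
  · obtain ⟨j, hj, hjx⟩ : ∃ j ≤ r, d j = x - n - 1 := by
      rcases (show x = n + 1 ∨ n + 2 ≤ x by omega) with rfl | hx2
      · exact ⟨0, Nat.zero_le r, by omega⟩
      · exact (mem_image_Icc_iff h0 (by omega)).mp
          (not_not.mp fun hxJ => h2 ⟨hx2, hx, by rwa [show x - 1 - n = x - n - 1 by omega]⟩)
    rw [show x = n + (d j + 1) by omega]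
    exact height_add_d_add_one_eq_zero hd hdn hj

theorem height_le (hd : StrictMonoOn d (Set.Iic r)) (hdn : d r ≤ n) {x : ℕ} (hx : x ≤ 2 * n) :
    height n r d x ≤ 2 * n := by
  have : d (blockIdx r d x) ≤ d r :=
    hd.monotoneOn (Set.mem_Iic.mpr (blockIdx_le x)) (Set.mem_Iic.mpr le_rfl) (blockIdx_le x)
  unfold height
  split_ifs <;> omega

theorem sum_lowerBlocks (h0 : d 0 = 0) (hd : StrictMonoOn d (Set.Iic r)) (k : ℕ) :
    ∑ x ∈ Ico 1 (d r + 1), (if k ≤ height n r d x then 1 else 0) =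
      ∑ i ∈ Icc 1 r, (d i - d (i - 1) - k) := by
  have he : MonotoneOn (fun i => d i + 1) (Set.Iic r) := fun a ha b hb hab =>
    Nat.add_le_add_right (hd.monotoneOn ha hb hab) 1
  rw [show Ico 1 (d r + 1) = Ico (d 0 + 1) (d r + 1) by rw [h0], sum_Ico_eq_sum_Icc_sum_Ico _ he]
  refine sum_congr rfl fun i hi => ?_
  obtain ⟨hi1, hir⟩ := mem_Icc.mp hi
  rw [sum_Ico_ite_le_sub_right k le_rfl fun x hx =>
    height_lowerBlock hd hi1 hir (by simp at hx; omega) (by simp at hx; omega)]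
  omega

theorem sum_upperBlocks (h0 : d 0 = 0) (hd : StrictMonoOn d (Set.Iic r)) (hdn : d r ≤ n)
    (k : ℕ) :
    ∑ x ∈ Ico (n + 1) (n + d r + 1), (if k ≤ height n r d x then 1 else 0) =
      ∑ i ∈ Icc 1 r, (d i - d (i - 1) - k) := by
  have he : MonotoneOn (fun i => n + d i + 1) (Set.Iic r) := fun a ha b hb hab =>
    Nat.add_le_add_right (Nat.add_le_add_left (hd.monotoneOn ha hb hab) n) 1
  rw [show Ico (n + 1) (n + d r + 1) = Ico (n + d 0 + 1) (n + d r + 1) by rw [h0],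
    sum_Ico_eq_sum_Icc_sum_Ico _ he]
  refine sum_congr rfl fun i hi => ?_
  obtain ⟨hi1, hir⟩ := mem_Icc.mp hi
  rw [sum_Ico_ite_le_sub_left k le_rfl fun x hx =>
    (height_upperBlock hd hdn hi1 hir (by simp at hx; omega) (by simp at hx; omega)).trans
      (by omega)]
  omega

theorem sum_range_ite_le_height (h0 : d 0 = 0) (hd : StrictMonoOn d (Set.Iic r))
    (hdn : d r ≤ n) (k : ℕ) :
    ∑ x ∈ range (2 * n + 1), (if k ≤ height n r d x then 1 else 0) =
      (2 * (n - d r) + 1 - k) + 2 * ∑ i ∈ Icc 1 r, (d i - d (i - 1) - k) := by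
  rw [range_eq_Ico, ← sum_Ico_consecutive _ (Nat.zero_le 1) (by omega : 1 ≤ 2 * n + 1),
    ← sum_Ico_consecutive _ (by omega : 1 ≤ d r + 1) (by omega : d r + 1 ≤ 2 * n + 1),
    ← sum_Ico_consecutive _ (by omega : d r + 1 ≤ n + 1) (by omega : n + 1 ≤ 2 * n + 1),
    ← sum_Ico_consecutive _ (by omega : n + 1 ≤ n + d r + 1)
      (by omega : n + d r + 1 ≤ 2 * n + 1),
    sum_lowerBlocks h0 hd, sum_upperBlocks h0 hd hdn,
    sum_Ico_ite_le_sub_right (c := n - d r) k (by omega) fun x hx => by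
      rw [show x = 0 by simpa using hx, height_zero]; rfl,
    sum_Ico_ite_le_sub_right (c := 2 * n - d r + 1) k (by omega) fun x hx =>
      height_lowerTail (by simp at hx; omega) (by simp at hx; omega),
    sum_Ico_ite_le_sub_left (c := n + d r + 1) k le_rfl fun x hx =>
      (height_upperTail (by simp at hx; omega)).trans (by omega)]
  omega

theorem isSome_partialIter_succBFin_iff (h0 : d 0 = 0) (hd : StrictMonoOn d (Set.Iic r))
    (hdn : d r ≤ n) (hr : 1 ≤ r) (k : ℕ) (i : Fin (2 * n + 1)) :
    (partialIter (succBFin n ((Icc 1 r).image d)) k i).isSome ↔ k ≤ height n r d i :=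
  isSome_partialIter_iff_le
    (fun i hi => height_eq_zero_of_succB_eq_none h0 hd hdn (by omega) (succBFin_eq_none_iff.mp hi))
    (fun i j hij => height_eq_add_one_of_succB_eq_some h0 hd hdn hr (succBFin_eq_some_iff.mp hij))
    k i

end Height

theorem stmt_6_general (n r : ℕ) (hr : 1 ≤ r)
    (d : ℕ → ℕ) (h0 : d 0 = 0)
    (hmono : ∀ i, i < r → d i < d (i + 1))
    (hdn : d r ≤ n)
    (J : Finset ℕ) (hJ : J = (Finset.Icc 1 r).image d)
    (X : Matrix (Fin (2 * n + 1)) (Fin (2 * n + 1)) ℚ)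
    (hX : X = Matrix.of fun k l : Fin (2 * n + 1) =>
      (if l.val = k.val + 1 ∧ 1 ≤ k.val ∧ k.val ≤ n - 1 ∧ k.val ∉ J then (1 : ℚ) else 0)
        - (if k.val = l.val + 1 ∧ n + 1 ≤ l.val ∧ l.val ≤ 2 * n - 1 ∧ (l.val - n) ∉ J
            then (1 : ℚ) else 0)
        + (if n ∉ J ∧ k.val = 0 ∧ l.val = 2 * n then (1 : ℚ) else 0)
        - (if n ∉ J ∧ k.val = n ∧ l.val = 0 then (1 : ℚ) else 0))
    (D : Multiset ℕ) (hD : D = (Finset.Icc 1 r).val.map fun i => d i - d (i - 1))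
    (P : Multiset ℕ) (hP : P = (2 * (n - d r) + 1) ::ₘ (D + D)) :
    IsNilpotent X ∧ ∀ k : ℕ, (X ^ k).rank = (P.map fun p => p - k).sum := by
  subst hJ hD hP
  have hd : StrictMonoOn d (Set.Iic r) := strictMonoOn_Iic_of_lt_succ hmono
  have hn : 1 ≤ n := by
    have := hd (Set.mem_Iic.mpr r.zero_le) (Set.mem_Iic.mpr le_rfl) hr
    omega
  have hXsupp : ∀ i j, X i j ≠ 0 ↔ succBFin n ((Icc 1 r).image d) i = some j := fun i j => by
    rw [succBFin_eq_some_iff, hX]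
    exact entryB_ne_zero_iff hn i j
  have hpow := Matrix.pow_apply_ne_zero_iff hXsupp
  have hiter := isSome_partialIter_succBFin_iff h0 hd hdn hr
  refine ⟨⟨2 * n + 1, Matrix.ext fun i j => not_not.mp fun hij => ?_⟩, fun k => ?_⟩
  · have := (hiter _ i).mp (Option.isSome_iff_exists.mpr ⟨j, (hpow _ i j).mp hij⟩)
    have := height_le hd hdn (show (i : ℕ) ≤ 2 * n by omega)
    omega
  · rw [Matrix.rank_eq_card_isSome (hpow k) (partialIter_injective succBFin_injective k),
      filter_congr fun i _ => hiter k i, card_filter,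
      Fin.sum_univ_eq_sum_range (fun x => if k ≤ height n r d x then 1 else 0),
      sum_range_ite_le_height h0 hd hdn]
    rw [Multiset.map_cons, Multiset.sum_cons, Multiset.map_add, Multiset.sum_add,
      Multiset.map_map, ← two_mul]
    rfl

/-- Type `B_n`: the representative
`X_J = Σ_{i ∈ {1,...,n-1} \ J} (E_{i+1,i+2} - E_{n+i+2,n+i+1}) + [n ∉ J](E_{1,2n+1} - E_{n+1,1})`
(1-based indices, realized here 0-based on `Fin (2n+1)`) is nilpotent with Jordan type the
unreduced partition `P_B(J) = [(2(n-d_r)+1) (d_r - d_{r-1})² ... (d_2 - d_1)² d_1²]`. -/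
theorem stmt_6 (n r : ℕ) (hn : 2 ≤ n) (hr : 1 ≤ r)
    (d : ℕ → ℕ) (h0 : d 0 = 0)
    (hmono : ∀ i, i < r → d i < d (i + 1))
    (hdn : d r ≤ n)
    (J : Finset ℕ) (hJ : J = (Finset.Icc 1 r).image d)
    (X : Matrix (Fin (2 * n + 1)) (Fin (2 * n + 1)) ℚ)
    (hX : X = Matrix.of fun k l : Fin (2 * n + 1) =>
      (if l.val = k.val + 1 ∧ 1 ≤ k.val ∧ k.val ≤ n - 1 ∧ k.val ∉ J then (1 : ℚ) else 0)
        - (if k.val = l.val + 1 ∧ n + 1 ≤ l.val ∧ l.val ≤ 2 * n - 1 ∧ (l.val - n) ∉ J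
            then (1 : ℚ) else 0)
        + (if n ∉ J ∧ k.val = 0 ∧ l.val = 2 * n then (1 : ℚ) else 0)
        - (if n ∉ J ∧ k.val = n ∧ l.val = 0 then (1 : ℚ) else 0))
    (D : Multiset ℕ) (hD : D = (Finset.Icc 1 r).val.map fun i => d i - d (i - 1))
    (P : Multiset ℕ) (hP : P = (2 * (n - d r) + 1) ::ₘ (D + D)) :
    IsNilpotent X ∧ ∀ k : ℕ, (X ^ k).rank = (P.map fun p => p - k).sum :=
  stmt_6_general n r hr d h0 hmono hdn J hJ X hX D hD P hP
end

section
/- Let X_J be the 2n×2n matrix over ℚ given by X_J = Σ_{i ∈ {1,...,n-1} \ J} (E_{i, i+1} - E_{n+i+1, n+i}), plus E_{n, 2n} if n ∉ J. Then X_J is nilpotent and for every k ≥ 0, rank(X_J^k) = Σ_{p ∈ P_C(J)} max(p - k, 0); that is, the Jordan type of X_J is the (unreduced) type C_n partition P_C(J) = [2(n-d_r) (d_r - d_{r-1})^2 ... (d_2 - d_1)^2 d_1^2] (the part 2(n - d_r) is omitted when it is zero). -/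
/-!
`X_J` is a signed partial permutation matrix: its nonzero entries sit on the graph of a partial
injection `next` of the index set, which runs up each block `[d_{i-1}, d_i)` of the first half,
down each block `n + [d_{i-1}, d_i)` of the second half, and (if `d_r < n`) from the last block
`[d_r, n)` of the first half across to `2n - 1` and down to `n + d_r`. So `X_J^k` is supported
on the graph of `next^k`; as `next^k` is injective, `X_J^k (X_J^k)ᵀ` is diagonal, and the rank of
`X_J^k` is the number of indices from which `next` can still take `k` steps. A chain of length `p` contributes `max (p - k) 0` of them, and the chains have lengths
`d_i - d_{i-1}` (twice each) and `2 (n - d_r)`.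
-/

open Finset

namespace Matrix

variable {ι κ μ R : Type*}

def SupportedOnGraph [Zero R] (M : Matrix ι κ R) (f : ι → Option κ) : Prop :=
  ∀ i j, M i j ≠ 0 ↔ f i = some j

theorem SupportedOnGraph.eq_zero [Zero R] {M : Matrix ι κ R} {f : ι → Option κ}
    (hM : M.SupportedOnGraph f) {i : ι} {j : κ} (h : f i ≠ some j) : M i j = 0 :=
  not_not.1 fun h' => h ((hM i j).1 h')

theorem SupportedOnGraph.mul [Fintype κ] [NonUnitalNonAssocSemiring R] [NoZeroDivisors R]
    {M : Matrix ι κ R} {N : Matrix κ μ R} {f : ι → Option κ} {g : κ → Option μ}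
    (hM : M.SupportedOnGraph f) (hN : N.SupportedOnGraph g) :
    (M * N).SupportedOnGraph fun i => (f i).bind g := by
  intro i j
  show (∑ m, M i m * N m j) ≠ 0 ↔ (f i).bind g = some j
  cases hfi : f i with
  | none =>
    rw [sum_eq_zero fun m _ => by rw [hM.eq_zero (by simp [hfi]), zero_mul]]
    simp
  | some b =>
    rw [sum_eq_single b (fun m _ hm => by rw [hM.eq_zero (by simpa [hfi] using Ne.symm hm),
      zero_mul]) (by simp), Option.bind_some, mul_ne_zero_iff, ← hN]
    simp [(hM i b).2 hfi]

theorem SupportedOnGraph.pow [Fintype ι] [DecidableEq ι] [Semiring R] [NoZeroDivisors R]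
    [Nontrivial R] {M : Matrix ι ι R} {f : ι → Option ι} (hM : M.SupportedOnGraph f)
    (k : ℕ) :
    (M ^ k).SupportedOnGraph fun i => (·.bind f)^[k] (some i) := by
  induction k with
  | zero => intro i j; simp [one_apply]
  | succ k ih => simpa only [pow_succ, Function.iterate_succ_apply'] using ih.mul hM

theorem SupportedOnGraph.rank_eq [Fintype ι] [Fintype κ] [DecidableEq ι] [Field R]
    [LinearOrder R] [IsStrictOrderedRing R] {M : Matrix ι κ R} {f : ι → Option κ}
    (hM : M.SupportedOnGraph f) (hf : ∀ a b c, f a = some c → f b = some c → a = b) :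
    M.rank = #{i | (f i).isSome} := by
  have hdiag : M * Mᵀ = diagonal fun i => ∑ j, M i j ^ 2 := by
    ext a b
    rw [mul_apply]
    by_cases hab : a = b
    · simp [hab, sq]
    · rw [diagonal_apply_ne _ hab]
      refine sum_eq_zero fun j _ => ?_
      by_contra h
      obtain ⟨ha, hb⟩ := mul_ne_zero_iff.1 h
      exact hab (hf a b j ((hM a j).1 ha) ((hM b j).1 hb))
  have hpos : ∀ i, ∑ j, M i j ^ 2 ≠ 0 ↔ (f i).isSome := by
    intro i
    rw [Ne, sum_eq_zero_iff_of_nonneg (fun j _ => sq_nonneg _)]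
    simp only [mem_univ, true_implies, not_forall, pow_eq_zero_iff two_ne_zero, hM i,
      Option.isSome_iff_exists]
  rw [← rank_self_mul_transpose, hdiag, rank_diagonal, Fintype.card_subtype]
  simp only [hpos]

end Matrix

theorem Option.isSome_iterate_bind_iff {α : Type*} {f : α → Option α} {ℓ : α → ℕ}
    (hstep : ∀ a b, f a = some b → ℓ a = ℓ b + 1) (hstop : ∀ a, f a = none → ℓ a = 0)
    (k : ℕ) (a : α) : ((·.bind f)^[k] (some a)).isSome ↔ k ≤ ℓ a := by
  induction k generalizing a with
  | zero => simp
  | succ k ih =>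
    rw [Function.iterate_succ_apply, Option.bind_some]
    cases hfa : f a with
    | none =>
      rw [Function.iterate_fixed (by rfl)]
      simp [hstop a hfa]
    | some b => rw [ih, hstep a b hfa]; omega

theorem Option.iterate_bind_eq_some_inj {α : Type*} {f : α → Option α}
    (hf : ∀ a b c, f a = some c → f b = some c → a = b) (k : ℕ) :
    ∀ a b c, (·.bind f)^[k] (some a) = some c → (·.bind f)^[k] (some b) = some c →
      a = b := by
  induction k with
  | zero => simp
  | succ k ih =>
    intro a b c ha hb
    rw [Function.iterate_succ_apply', Option.bind_eq_some_iff] at ha hb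
    obtain ⟨x, hax, hxc⟩ := ha
    obtain ⟨y, hby, hyc⟩ := hb
    exact ih a b x hax (hf y x c hyc hxc ▸ hby)

theorem Finset.card_filter_Ico_consecutive (p : ℕ → Prop) [DecidablePred p] {a b c : ℕ}
    (hab : a ≤ b) (hbc : b ≤ c) :
    #{x ∈ Ico a b | p x} + #{x ∈ Ico b c | p x} = #{x ∈ Ico a c | p x} := by
  simp only [card_filter]
  exact sum_Ico_consecutive _ hab hbc

theorem Finset.card_filter_Ico_eq_sum_Icc (p : ℕ → Prop) [DecidablePred p] {e : ℕ → ℕ}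
    {m : ℕ} (he : MonotoneOn e (Set.Iic m)) :
    #{a ∈ Ico (e 0) (e m) | p a} = ∑ i ∈ Icc 1 m, #{a ∈ Ico (e (i - 1)) (e i) | p a} := by
  induction m with
  | zero => simp
  | succ m ih =>
    have hm : e m ≤ e (m + 1) := he (by simp) (by simp) m.le_succ
    have h0m : e 0 ≤ e m := he (by simp) (by simp) (Nat.zero_le _)
    rw [sum_Icc_succ_top (by omega), ← ih (he.mono (Set.Iic_subset_Iic.2 m.le_succ)),
      Nat.add_sub_cancel, card_filter_Ico_consecutive _ h0m hm]

theorem Nat.card_Ico_filter_le_of_eq_pred_sub {g : ℕ → ℕ} {lo hi k : ℕ}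
    (hg : ∀ a ∈ Ico lo hi, g a = hi - 1 - a) :
    #{a ∈ Ico lo hi | k ≤ g a} = hi - lo - k := by
  rw [filter_congr fun a ha => show k ≤ g a ↔ a < hi - k by rw [hg a ha]; grind,
    Ico_filter_lt, Nat.card_Ico]
  omega

theorem Nat.card_Ico_filter_le_of_eq_sub {g : ℕ → ℕ} {lo hi k : ℕ}
    (hg : ∀ a ∈ Ico lo hi, g a = a - lo) : #{a ∈ Ico lo hi | k ≤ g a} = hi - lo - k := by
  rw [filter_congr fun a ha => show k ≤ g a ↔ lo + k ≤ a by rw [hg a ha]; grind,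
    Ico_filter_le, Nat.card_Ico]
  omega

namespace TypeC

def next (n : ℕ) (J : Finset ℕ) (a : Fin (2 * n)) : Option (Fin (2 * n)) :=
  if h : a.val + 1 < n ∧ a.val + 1 ∉ J then some ⟨a + 1, by omega⟩
  else if h : n ∉ J ∧ a.val + 1 = n then some ⟨2 * n - 1, by omega⟩
  else if h : n < a.val ∧ a.val - n ∉ J then some ⟨a - 1, by omega⟩
  else none

def matrix (n : ℕ) (J : Finset ℕ) : Matrix (Fin (2 * n)) (Fin (2 * n)) ℚ :=
  Matrix.of fun k l : Fin (2 * n) =>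
    (if l.val = k.val + 1 ∧ 1 ≤ l.val ∧ l.val ≤ n - 1 ∧ l.val ∉ J then (1 : ℚ) else 0)
      - (if k.val = l.val + 1 ∧ n + 1 ≤ k.val ∧ k.val ≤ 2 * n - 1 ∧ (k.val - n) ∉ J
          then (1 : ℚ) else 0)
      + (if n ∉ J ∧ k.val = n - 1 ∧ l.val = 2 * n - 1 then (1 : ℚ) else 0)

theorem next_eq_some_iff (n : ℕ) (J : Finset ℕ) (a b : Fin (2 * n)) :
    next n J a = some b ↔
      (b.val = a.val + 1 ∧ a.val + 1 < n ∧ a.val + 1 ∉ J) ∨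
      (n ∉ J ∧ a.val + 1 = n ∧ b.val = 2 * n - 1) ∨
      (b.val + 1 = a.val ∧ n < a.val ∧ a.val - n ∉ J) := by
  unfold next
  split_ifs <;> simp [Fin.ext_iff] <;> grind

theorem matrix_supportedOnGraph (n : ℕ) (J : Finset ℕ) :
    (matrix n J).SupportedOnGraph (next n J) := by
  intro k l
  rw [next_eq_some_iff]
  simp only [matrix, Matrix.of_apply]
  split_ifs <;> norm_num <;> grind

/-- The number of steps `next` can still take from `a`: on the first half, up to just below the
next element of `J` (past `max J`, through `2n - 1` down to `n + max J`); on the second half,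
down to `n + j` for the largest `j ∈ J ∪ {0}` with `n + j ≤ a`. -/
def stepsLeft (n : ℕ) (J : Finset ℕ) (a : ℕ) : ℕ :=
  if a < n then
    if h : {j ∈ J | a < j}.Nonempty then {j ∈ J | a < j}.min' h - 1 - a
    else 2 * n - 1 - a - J.sup id
  else a - n - {j ∈ J | j ≤ a - n}.sup id

variable {n : ℕ} {J : Finset ℕ}

theorem next_eq_some_inj (a b c : Fin (2 * n))
    (ha : next n J a = some c) (hb : next n J b = some c) : a = b := by
  rw [next_eq_some_iff] at ha hb
  ext
  omega

theorem stepsLeft_of_lt_of_mem {a c : ℕ} (ha : a < n) (hc : c ∈ J) (hac : a < c)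
    (hgap : ∀ j ∈ J, a < j → c ≤ j) : stepsLeft n J a = c - 1 - a := by
  have hne : {j ∈ J | a < j}.Nonempty := ⟨c, mem_filter.2 ⟨hc, hac⟩⟩
  have hmin : {j ∈ J | a < j}.min' hne = c :=
    le_antisymm (min'_le _ _ (mem_filter.2 ⟨hc, hac⟩))
      (le_min' _ _ _ fun j hj => hgap j (mem_filter.1 hj).1 (mem_filter.1 hj).2)
  rw [stepsLeft, if_pos ha, dif_pos hne, hmin]

theorem stepsLeft_of_lt_of_forall_le {a : ℕ} (ha : a < n) (hJa : ∀ j ∈ J, j ≤ a) :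
    stepsLeft n J a = 2 * n - 1 - a - J.sup id := by
  have hne : ¬{j ∈ J | a < j}.Nonempty := fun ⟨j, hj⟩ =>
    (mem_filter.1 hj).2.not_ge (hJa j (mem_filter.1 hj).1)
  rw [stepsLeft, if_pos ha, dif_neg hne]

theorem stepsLeft_add {t c : ℕ} (hc : c = 0 ∨ c ∈ J) (hct : c ≤ t)
    (hgap : ∀ j ∈ J, j ≤ t → j ≤ c) : stepsLeft n J (n + t) = t - c := by
  have hsup : {j ∈ J | j ≤ t}.sup id = c := by
    refine le_antisymm (Finset.sup_le fun j hj => hgap j (mem_filter.1 hj).1 (mem_filter.1 hj).2) ?_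
    rcases hc with rfl | hc
    · exact Nat.zero_le _
    · exact le_sup (f := id) (mem_filter.2 ⟨hc, hct⟩)
  rw [stepsLeft, if_neg (by omega), Nat.add_sub_cancel_left, hsup]

theorem stepsLeft_succ_of_not_mem {a : ℕ} (ha : a + 1 < n) (haJ : a + 1 ∉ J) :
    stepsLeft n J a = stepsLeft n J (a + 1) + 1 := by
  have hfilter : {j ∈ J | a + 1 < j} = {j ∈ J | a < j} := by
    refine filter_congr fun j hj => ?_
    have : j ≠ a + 1 := fun h => haJ (h ▸ hj)
    omega
  rw [stepsLeft, stepsLeft, if_pos (by omega), if_pos ha, hfilter]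
  by_cases hne : {j ∈ J | a < j}.Nonempty
  · have hmin := mem_filter.1 (min'_mem _ hne)
    have : {j ∈ J | a < j}.min' hne ≠ a + 1 := fun h => haJ (h ▸ hmin.1)
    rw [dif_pos hne, dif_pos hne]
    omega
  · have hsup : J.sup id ≤ a :=
      Finset.sup_le fun j hj => not_lt.1 fun h => hne ⟨j, mem_filter.2 ⟨hj, h⟩⟩
    rw [dif_neg hne, dif_neg hne]
    omega

theorem stepsLeft_pred_of_not_mem {t : ℕ} (ht : 0 < t) (htJ : t ∉ J) :
    stepsLeft n J (n + t) = stepsLeft n J (n + (t - 1)) + 1 := by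
  have hfilter : {j ∈ J | j ≤ t - 1} = {j ∈ J | j ≤ t} := by
    refine filter_congr fun j hj => ?_
    have : j ≠ t := fun h => htJ (h ▸ hj)
    omega
  have hsup : {j ∈ J | j ≤ t}.sup id ≤ t - 1 := Finset.sup_le fun j hj => by
    have : j ≠ t := fun h => htJ (h ▸ (mem_filter.1 hj).1)
    have := (mem_filter.1 hj).2
    simp only [id]
    omega
  rw [stepsLeft, stepsLeft, if_neg (by omega), if_neg (by omega), Nat.add_sub_cancel_left,
    Nat.add_sub_cancel_left, hfilter]
  omega

theorem stepsLeft_of_next_eq_some (hJn : ∀ j ∈ J, j ≤ n) {a b : Fin (2 * n)}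
    (h : next n J a = some b) : stepsLeft n J a = stepsLeft n J b + 1 := by
  rcases (next_eq_some_iff n J a b).1 h with
    ⟨hb, ha, haJ⟩ | ⟨hnJ, ha, hb⟩ | ⟨hb, ha, haJ⟩
  · rw [hb]
    exact stepsLeft_succ_of_not_mem ha haJ
  · have hJ : ∀ j ∈ J, j ≤ n - 1 := fun j hj => by
      have := hJn j hj
      have : j ≠ n := fun h => hnJ (h ▸ hj)
      omega
    have hb' : b.val = n + (n - 1) := by omega
    rw [stepsLeft_of_lt_of_forall_le (by omega) fun j hj => (hJ j hj).trans (by omega), hb',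
      stepsLeft, if_neg (by omega), Nat.add_sub_cancel_left, filter_true_of_mem hJ]
    have := Finset.sup_le (f := id) hJ
    omega
  · obtain ⟨t, ht⟩ : ∃ t, a.val = n + t := ⟨a.val - n, by omega⟩
    rw [ht, Nat.add_sub_cancel_left] at haJ
    rw [ht, show b.val = n + (t - 1) by omega]
    exact stepsLeft_pred_of_not_mem (by omega) haJ

theorem stepsLeft_of_next_eq_none {a : Fin (2 * n)} (h : next n J a = none) :
    stepsLeft n J a = 0 := by
  unfold next at h
  split_ifs at h with h1 h2 h3
  rcases lt_trichotomy (a.val + 1) n with ha | ha | ha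
  · rw [stepsLeft_of_lt_of_mem (by omega) (not_not.1 fun h => h1 ⟨ha, h⟩)
      (Nat.lt_succ_self _) fun j _ => id]
    omega
  · have hnJ : n ∈ J := not_not.1 fun h => h2 ⟨h, ha⟩
    rw [stepsLeft_of_lt_of_mem (by omega) hnJ (by omega) fun j _ hj => by omega]
    omega
  · obtain ⟨t, ht⟩ : ∃ t, a.val = n + t := ⟨a.val - n, by omega⟩
    rcases Nat.eq_zero_or_pos t with rfl | htpos
    · rw [ht, stepsLeft_add (c := 0) (Or.inl rfl) le_rfl fun j _ hj => hj]
    · have htJ : t ∈ J :=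
        not_not.1 fun h => h3 ⟨by omega, by rwa [ht, Nat.add_sub_cancel_left]⟩
      rw [ht, stepsLeft_add (Or.inr htJ) le_rfl fun j _ hj => hj, Nat.sub_self]

theorem isSome_iterate_next_iff (hJn : ∀ j ∈ J, j ≤ n) (k : ℕ) (a : Fin (2 * n)) :
    ((·.bind (next n J))^[k] (some a)).isSome ↔ k ≤ stepsLeft n J a :=
  Option.isSome_iterate_bind_iff (fun _ _ => stepsLeft_of_next_eq_some hJn)
    (fun _ => stepsLeft_of_next_eq_none) k a

theorem rank_matrix_pow (hJn : ∀ j ∈ J, j ≤ n) (k : ℕ) :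
    (matrix n J ^ k).rank = #{a ∈ range (2 * n) | k ≤ stepsLeft n J a} := by
  rw [((matrix_supportedOnGraph n J).pow k).rank_eq
    (Option.iterate_bind_eq_some_inj next_eq_some_inj k)]
  simp only [isSome_iterate_next_iff hJn]
  rw [← Nat.Iio_eq_range, ← Fin.map_valEmbedding_univ, filter_map, card_map]
  rfl

theorem stepsLeft_lt (hJn : ∀ j ∈ J, j ≤ n) {a : ℕ} (ha : a < 2 * n) :
    stepsLeft n J a < 2 * n := by
  unfold stepsLeft
  split_ifs with h1 h2
  · have := hJn _ (mem_filter.1 (min'_mem _ h2)).1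
    omega
  all_goals omega

theorem matrix_pow_two_mul_eq_zero (hJn : ∀ j ∈ J, j ≤ n) : matrix n J ^ (2 * n) = 0 := by
  ext a b
  refine ((matrix_supportedOnGraph n J).pow (2 * n)).eq_zero fun h => ?_
  have := (isSome_iterate_next_iff hJn (2 * n) a).1 (by rw [h]; rfl)
  exact (stepsLeft_lt hJn a.isLt).not_ge this

variable {r : ℕ} {d : ℕ → ℕ}

theorem le_of_mem_image (hd : StrictMonoOn d (Set.Iic r)) (hJ : J = (Icc 1 r).image d) :
    ∀ j ∈ J, j ≤ d r := by
  rintro _ hj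
  obtain ⟨m, hm, rfl⟩ := mem_image.1 (hJ ▸ hj)
  exact hd.monotoneOn (by simp [(mem_Icc.1 hm).2]) (by simp) (mem_Icc.1 hm).2

theorem le_or_le_of_mem_image (hd : StrictMonoOn d (Set.Iic r)) (hJ : J = (Icc 1 r).image d)
    {i : ℕ} (hi : i ≤ r) : ∀ j ∈ J, j ≤ d (i - 1) ∨ d i ≤ j := by
  rintro _ hj
  obtain ⟨m, hm, rfl⟩ := mem_image.1 (hJ ▸ hj)
  have hmr := (mem_Icc.1 hm).2
  rcases lt_or_ge m i with hmi | hmi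
  · exact .inl (hd.monotoneOn (by simp [hmr]) (by simp; omega) (by omega))
  · exact .inr (hd.monotoneOn (by simp [hi]) (by simp [hmr]) hmi)

theorem eq_zero_or_mem_image (hd0 : d 0 = 0) (hJ : J = (Icc 1 r).image d) {i : ℕ}
    (hi : i ≤ r) : d i = 0 ∨ d i ∈ J := by
  rcases Nat.eq_zero_or_pos i with rfl | hi0
  · exact .inl hd0
  · exact .inr (hJ ▸ mem_image_of_mem d (mem_Icc.2 ⟨hi0, hi⟩))

theorem sup_id_eq (hd0 : d 0 = 0) (hd : StrictMonoOn d (Set.Iic r))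
    (hJ : J = (Icc 1 r).image d) : J.sup id = d r := by
  refine le_antisymm (Finset.sup_le (le_of_mem_image hd hJ)) ?_
  rcases eq_zero_or_mem_image hd0 hJ le_rfl with h | h
  · exact h ▸ Nat.zero_le _
  · exact le_sup (f := id) h

theorem stepsLeft_segment (hd : StrictMonoOn d (Set.Iic r)) (hdn : d r ≤ n)
    (hJ : J = (Icc 1 r).image d) {i a : ℕ} (hi : i ∈ Icc 1 r)
    (ha : a ∈ Ico (d (i - 1)) (d i)) :
    stepsLeft n J a = d i - 1 - a := by
  obtain ⟨hi1, hir⟩ := mem_Icc.1 hi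
  obtain ⟨ha1, ha2⟩ := mem_Ico.1 ha
  have hdi : d i ≤ d r := le_of_mem_image hd hJ _ (hJ ▸ mem_image_of_mem d hi)
  refine stepsLeft_of_lt_of_mem (by omega) (hJ ▸ mem_image_of_mem d hi) ha2 fun j hj haj => ?_
  have := le_or_le_of_mem_image hd hJ hir j hj
  omega

theorem stepsLeft_add_segment (hd0 : d 0 = 0) (hd : StrictMonoOn d (Set.Iic r))
    (hJ : J = (Icc 1 r).image d) {i t : ℕ} (hi : i ∈ Icc 1 r)
    (ht : t ∈ Ico (d (i - 1)) (d i)) :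
    stepsLeft n J (n + t) = t - d (i - 1) := by
  obtain ⟨hi1, hir⟩ := mem_Icc.1 hi
  obtain ⟨ht1, ht2⟩ := mem_Ico.1 ht
  refine stepsLeft_add (eq_zero_or_mem_image hd0 hJ (by omega)) ht1 fun j hj hjt => ?_
  have := le_or_le_of_mem_image hd hJ hir j hj
  omega

theorem stepsLeft_tail (hd0 : d 0 = 0) (hd : StrictMonoOn d (Set.Iic r))
    (hJ : J = (Icc 1 r).image d) {a : ℕ} (ha : a ∈ Ico (d r) n) :
    stepsLeft n J a = 2 * n - 1 - a - d r := by
  obtain ⟨ha1, ha2⟩ := mem_Ico.1 ha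
  rw [stepsLeft_of_lt_of_forall_le ha2 fun j hj => (le_of_mem_image hd hJ j hj).trans ha1,
    sup_id_eq hd0 hd hJ]

theorem stepsLeft_add_tail (hd0 : d 0 = 0) (hd : StrictMonoOn d (Set.Iic r))
    (hJ : J = (Icc 1 r).image d) {t : ℕ} (ht : d r ≤ t) :
    stepsLeft n J (n + t) = t - d r :=
  stepsLeft_add (eq_zero_or_mem_image hd0 hJ le_rfl) ht fun j hj _ => le_of_mem_image hd hJ j hj

theorem card_filter_stepsLeft_top (hd0 : d 0 = 0) (hd : StrictMonoOn d (Set.Iic r))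
    (hdn : d r ≤ n) (hJ : J = (Icc 1 r).image d) (k : ℕ) :
    #{a ∈ Ico 0 (d r) | k ≤ stepsLeft n J a} = ∑ i ∈ Icc 1 r, (d i - d (i - 1) - k) := by
  rw [← hd0, card_filter_Ico_eq_sum_Icc _ hd.monotoneOn]
  exact sum_congr rfl fun i hi =>
    Nat.card_Ico_filter_le_of_eq_pred_sub fun a ha => stepsLeft_segment hd hdn hJ hi ha

theorem card_filter_stepsLeft_bottom (hd0 : d 0 = 0) (hd : StrictMonoOn d (Set.Iic r))
    (hJ : J = (Icc 1 r).image d) (k : ℕ) :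
    #{a ∈ Ico n (n + d r) | k ≤ stepsLeft n J a} =
      ∑ i ∈ Icc 1 r, (d i - d (i - 1) - k) := by
  have hsplit := card_filter_Ico_eq_sum_Icc (fun a => k ≤ stepsLeft n J a)
    (e := (n + d ·)) fun a ha b hb hab => Nat.add_le_add_left (hd.monotoneOn ha hb hab) n
  rw [hd0, Nat.add_zero] at hsplit
  refine hsplit.trans (sum_congr rfl fun i hi => ?_)
  rw [Nat.card_Ico_filter_le_of_eq_sub fun a ha => ?_]
  · omega
  · obtain ⟨ha1, ha2⟩ := mem_Ico.1 ha
    rw [show a = n + (a - n) by omega,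
      stepsLeft_add_segment hd0 hd hJ hi (mem_Ico.2 ⟨by omega, by omega⟩)]
    omega

theorem card_filter_stepsLeft_tail (hd0 : d 0 = 0) (hd : StrictMonoOn d (Set.Iic r))
    (hdn : d r ≤ n) (hJ : J = (Icc 1 r).image d) (k : ℕ) :
    #{a ∈ Ico (d r) n | k ≤ stepsLeft n J a} +
      #{a ∈ Ico (n + d r) (2 * n) | k ≤ stepsLeft n J a} = 2 * (n - d r) - k := by
  have htop : #{a ∈ Ico (d r) n | k ≤ stepsLeft n J a} = min n (2 * n - d r - k) - d r := by
    rw [filter_congr fun a ha => show k ≤ stepsLeft n J a ↔ a < 2 * n - d r - k by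
      rw [stepsLeft_tail hd0 hd hJ ha]; have := mem_Ico.1 ha; omega,
      Ico_filter_lt, Nat.card_Ico]
  have hbot : #{a ∈ Ico (n + d r) (2 * n) | k ≤ stepsLeft n J a} = n - d r - k := by
    rw [Nat.card_Ico_filter_le_of_eq_sub fun a ha => ?_]
    · omega
    · obtain ⟨ha1, -⟩ := mem_Ico.1 ha
      rw [show a = n + (a - n) by omega, stepsLeft_add_tail hd0 hd hJ (by omega)]
      omega
  rw [htop, hbot]
  omega

theorem card_filter_stepsLeft (hd0 : d 0 = 0) (hd : StrictMonoOn d (Set.Iic r))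
    (hdn : d r ≤ n) (hJ : J = (Icc 1 r).image d) (k : ℕ) :
    #{a ∈ range (2 * n) | k ≤ stepsLeft n J a} =
      (2 * (n - d r) - k) + 2 * ∑ i ∈ Icc 1 r, (d i - d (i - 1) - k) := by
  rw [range_eq_Ico, ← card_filter_Ico_consecutive _ (Nat.zero_le (n + d r)) (by omega),
    ← card_filter_Ico_consecutive _ (Nat.zero_le n) (Nat.le_add_right n (d r)),
    ← card_filter_Ico_consecutive _ (Nat.zero_le (d r)) hdn,
    card_filter_stepsLeft_top hd0 hd hdn hJ, card_filter_stepsLeft_bottom hd0 hd hJ,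
    ← card_filter_stepsLeft_tail hd0 hd hdn hJ k]
  ring

end TypeC

theorem stmt_7_general (n r : ℕ)
    (d : ℕ → ℕ) (h0 : d 0 = 0)
    (hmono : ∀ i, i < r → d i < d (i + 1))
    (hdn : d r ≤ n)
    (J : Finset ℕ) (hJ : J = (Finset.Icc 1 r).image d)
    (X : Matrix (Fin (2 * n)) (Fin (2 * n)) ℚ)
    (hX : X = Matrix.of fun k l : Fin (2 * n) =>
      (if l.val = k.val + 1 ∧ 1 ≤ l.val ∧ l.val ≤ n - 1 ∧ l.val ∉ J then (1 : ℚ) else 0)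
        - (if k.val = l.val + 1 ∧ n + 1 ≤ k.val ∧ k.val ≤ 2 * n - 1 ∧ (k.val - n) ∉ J
            then (1 : ℚ) else 0)
        + (if n ∉ J ∧ k.val = n - 1 ∧ l.val = 2 * n - 1 then (1 : ℚ) else 0))
    (D : Multiset ℕ) (hD : D = (Finset.Icc 1 r).val.map fun i => d i - d (i - 1))
    (P : Multiset ℕ) (hP : P = if d r = n then D + D else 2 * (n - d r) ::ₘ (D + D)) :
    IsNilpotent X ∧ ∀ k : ℕ, (X ^ k).rank = (P.map fun p => p - k).sum := by
  have hd : StrictMonoOn d (Set.Iic r) := strictMonoOn_Iic_of_lt_succ fun m hm => by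
    simpa using hmono m hm
  have hJn : ∀ j ∈ J, j ≤ n := fun j hj => (TypeC.le_of_mem_image hd hJ j hj).trans hdn
  have hDsum : ∀ k,
      (D.map fun p => p - k).sum = ∑ i ∈ Finset.Icc 1 r, (d i - d (i - 1) - k) := by
    intro k
    rw [hD, Multiset.map_map]
    rfl
  rw [show X = TypeC.matrix n J from hX]
  refine ⟨⟨2 * n, TypeC.matrix_pow_two_mul_eq_zero hJn⟩, fun k => ?_⟩
  rw [TypeC.rank_matrix_pow hJn, TypeC.card_filter_stepsLeft h0 hd hdn hJ, hP]
  split_ifs with hdr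
  · rw [Multiset.map_add, Multiset.sum_add, hDsum, hdr, Nat.sub_self]
    omega
  · rw [Multiset.map_cons, Multiset.sum_cons, Multiset.map_add, Multiset.sum_add, hDsum]
    ring

/-- Type `C_n`: the representative
`X_J = Σ_{i ∈ {1,...,n-1} \ J} (E_{i,i+1} - E_{n+i+1,n+i}) + [n ∉ J] E_{n,2n}`
(1-based indices, realized here 0-based on `Fin (2n)`) is nilpotent with Jordan type the
unreduced partition `P_C(J) = [2(n-d_r) (d_r - d_{r-1})² ... (d_2 - d_1)² d_1²]`, the part
`2(n - d_r)` being omitted when it is zero. -/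
theorem stmt_7 (n r : ℕ) (hn : 2 ≤ n) (hr : 1 ≤ r)
    (d : ℕ → ℕ) (h0 : d 0 = 0)
    (hmono : ∀ i, i < r → d i < d (i + 1))
    (hdn : d r ≤ n)
    (J : Finset ℕ) (hJ : J = (Finset.Icc 1 r).image d)
    (X : Matrix (Fin (2 * n)) (Fin (2 * n)) ℚ)
    (hX : X = Matrix.of fun k l : Fin (2 * n) =>
      (if l.val = k.val + 1 ∧ 1 ≤ l.val ∧ l.val ≤ n - 1 ∧ l.val ∉ J then (1 : ℚ) else 0)
        - (if k.val = l.val + 1 ∧ n + 1 ≤ k.val ∧ k.val ≤ 2 * n - 1 ∧ (k.val - n) ∉ J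
            then (1 : ℚ) else 0)
        + (if n ∉ J ∧ k.val = n - 1 ∧ l.val = 2 * n - 1 then (1 : ℚ) else 0))
    (D : Multiset ℕ) (hD : D = (Finset.Icc 1 r).val.map fun i => d i - d (i - 1))
    (P : Multiset ℕ) (hP : P = if d r = n then D + D else 2 * (n - d r) ::ₘ (D + D)) :
    IsNilpotent X ∧ ∀ k : ℕ, (X ^ k).rank = (P.map fun p => p - k).sum :=
  stmt_7_general n r d h0 hmono hdn J hJ X hX D hD P hP
end

section
/- Suppose n - 1 ∈ J and n ∈ J (so d_{r-1} = n-1 and d_r = n). Let X_J be the 2n×2n matrix over ℚ given by X_J = Σ_{i ∈ {1,...,n-1} \ J} (E_{i, i+1} - E_{n+i+1, n+i}). Then X_J is nilpotent and for every k ≥ 0, rank(X_J^k) = Σ_{p ∈ P} max(p - k, 0), where P is the multiset consisting of each difference d_i - d_{i-1} (1 ≤ i ≤ r) taken with multiplicity 2; that is, the Jordan type of X_J is the type D_n partition [(d_r - d_{r-1})^2 ... (d_2 - d_1)^2 d_1^2]. -/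
/-!
Reindexing `Fin (2n)` as `Fin n ⊕ Fin n` exhibits `X_J` as the block sum of `A` and `-Aᵀ`, where
`A` is the shift `e_a ↦ e_{a+1}` cut at the elements of `J`; this is why every part of the
partition comes twice. Each power `A^k` is a partial permutation matrix, with `(A^k)_{a,a+k} = 1`
exactly when no element of `J` lies in `(a, a+k]`. For such a matrix `M * Mᵀ` is diagonal, so its
rank is its number of nonzero rows; those rows are counted between consecutive `d_i`, the run
`[d_{i-1}, d_i)` contributing `max(d_i - d_{i-1} - k, 0)`.
-/

open Matrix Finset

namespace Matrix

variable {m m' n n' α K : Type*} [Fintype m] [Fintype m'] [Fintype n] [Fintype n']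

theorem fromBlocks_zero_zero_pow [DecidableEq m] [DecidableEq n] [Semiring α]
    (A : Matrix m m α) (D : Matrix n n α) (k : ℕ) :
    fromBlocks A 0 0 D ^ k = fromBlocks (A ^ k) 0 0 (D ^ k) := by
  induction k with
  | zero => simp
  | succ k ih => simp [pow_succ, ih, fromBlocks_multiply]

theorem neg_transpose_pow_apply [DecidableEq n] [CommRing α] (A : Matrix n n α) (k : ℕ)
    (a b : n) :
    ((-Aᵀ) ^ k) a b = (-1) ^ k * (A ^ k) b a := by
  rw [← transpose_neg, ← transpose_pow, transpose_apply, ← neg_one_smul α A, smul_pow,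
    smul_apply, smul_eq_mul]

theorem rank_neg_transpose_pow [DecidableEq n] [Field K] (A : Matrix n n K) (k : ℕ) :
    ((-Aᵀ) ^ k).rank = (A ^ k).rank := by
  rw [← transpose_neg, ← transpose_pow, rank_transpose, ← neg_one_smul K A, smul_pow,
    rank_smul_of_mem_nonZeroDivisors]
  exact mem_nonZeroDivisors_of_ne_zero (pow_ne_zero _ (neg_ne_zero.2 one_ne_zero))

variable [Field K] [LinearOrder K] [IsStrictOrderedRing K]

theorem rank_eq_card_nonzero_rows (M : Matrix m n K)
    (hM : ∀ a a' b, M a b ≠ 0 → M a' b ≠ 0 → a = a') :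
    M.rank = Nat.card {a // ∃ b, M a b ≠ 0} := by
  classical
  have hgram : M * Mᵀ = diagonal fun a => ∑ b, M a b * M a b := by
    ext a a'
    rw [mul_apply, diagonal_apply]
    split_ifs with h
    · subst h; rfl
    · refine sum_eq_zero fun b _ => ?_
      by_contra hb
      exact h (hM a a' b (left_ne_zero_of_mul hb) (right_ne_zero_of_mul hb))
  rw [← rank_self_mul_transpose, hgram, rank_diagonal, ← Nat.card_eq_fintype_card]
  congr! 2
  ext a
  simp [sum_eq_zero_iff_of_nonneg fun b _ => mul_self_nonneg (M a b)]

theorem rank_fromBlocks_zero_zero_of_colMonomial (P : Matrix m n K) (Q : Matrix m' n' K)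
    (hP : ∀ a a' b, P a b ≠ 0 → P a' b ≠ 0 → a = a')
    (hQ : ∀ a a' b, Q a b ≠ 0 → Q a' b ≠ 0 → a = a') :
    (fromBlocks P 0 0 Q).rank = P.rank + Q.rank := by
  rw [rank_eq_card_nonzero_rows _ hP, rank_eq_card_nonzero_rows _ hQ,
    rank_eq_card_nonzero_rows]
  · rw [Nat.card_congr Equiv.subtypeSum, Nat.card_sum]
    simp
  · rintro (a | a) (a' | a') (b | b) <;> simp
    exacts [hP a a' b, hQ a a' b]

end Matrix

def cutShift (R : Type*) [Zero R] [One R] (n : ℕ) (J : Finset ℕ) : Matrix (Fin n) (Fin n) R :=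
  of fun a b => if b.val = a.val + 1 ∧ b.val ∉ J then 1 else 0

def typeDRep (R : Type*) [Ring R] (n : ℕ) (J : Finset ℕ) :
    Matrix (Fin (2 * n)) (Fin (2 * n)) R :=
  of fun k l =>
    (if l.val = k.val + 1 ∧ 1 ≤ l.val ∧ l.val ≤ n - 1 ∧ l.val ∉ J then 1 else 0)
      - (if k.val = l.val + 1 ∧ n + 1 ≤ k.val ∧ k.val ≤ 2 * n - 1 ∧ (k.val - n) ∉ J
          then 1 else 0)

def sumEquivTwoMul (n : ℕ) : Fin n ⊕ Fin n ≃ Fin (2 * n) :=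
  finSumFinEquiv.trans (finCongr (two_mul n).symm)

section CutShift

variable {R : Type*} {n : ℕ} {J : Finset ℕ}

theorem cutShift_pow_apply [Semiring R] (k : ℕ) (a b : Fin n) :
    (cutShift R n J ^ k) a b =
      if b.val = a.val + k ∧ Disjoint (Ioc a.val b.val) J then 1 else 0 := by
  induction k generalizing b with
  | zero =>
    by_cases h : a = b
    · subst h; simp
    · simp [one_apply, h, Fin.val_ne_of_ne (Ne.symm h)]
  | succ k ih =>
    rw [pow_succ, mul_apply]
    simp only [ih]
    simp only [cutShift, of_apply, ite_zero_mul_ite_zero, mul_one]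
    rcases lt_or_ge (a.val + k) n with h | h
    · rw [sum_eq_single ⟨a + k, h⟩ (fun c _ hc => if_neg fun hc' => hc (Fin.ext hc'.1.1))
        (by simp)]
      refine if_congr ?_ rfl rfl
      rw [← add_assoc]
      constructor
      · rintro ⟨⟨-, hd⟩, hb, hbJ⟩
        refine ⟨hb, ?_⟩
        simp only at hb hd
        rw [hb, ← insert_Ioc_right_eq_Ioc_add_one (by omega), disjoint_insert_left]
        exact ⟨hb ▸ hbJ, hd⟩
      · rintro ⟨hb, hd⟩
        rw [hb, ← insert_Ioc_right_eq_Ioc_add_one (by omega), disjoint_insert_left] at hd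
        exact ⟨⟨rfl, hd.2⟩, hb, hb ▸ hd.1⟩
    · rw [sum_eq_zero fun c _ => if_neg (by omega), if_neg (by omega)]

theorem cutShift_pow_apply_ne_zero_iff [Semiring R] [Nontrivial R] {k : ℕ} {a b : Fin n} :
    (cutShift R n J ^ k) a b ≠ 0 ↔ b.val = a.val + k ∧ Disjoint (Ioc a.val b.val) J := by
  rw [cutShift_pow_apply]
  exact ite_ne_right_iff.trans (and_iff_left one_ne_zero)

theorem cutShift_pow_self [Semiring R] : cutShift R n J ^ n = 0 := by
  ext a b
  rw [cutShift_pow_apply, if_neg (by omega), Matrix.zero_apply]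

variable {K : Type*} [Field K] [LinearOrder K] [IsStrictOrderedRing K]

theorem rank_cutShift_pow (k : ℕ) :
    (cutShift K n J ^ k).rank =
      ((range n).filter fun a => a + k < n ∧ Disjoint (Ioc a (a + k)) J).card := by
  have hrow (a : Fin n) : (∃ b, (cutShift K n J ^ k) a b ≠ 0) ↔
      a.val + k < n ∧ Disjoint (Ioc a.val (a.val + k)) J := by
    simp only [cutShift_pow_apply_ne_zero_iff]
    exact ⟨fun ⟨b, hb, hd⟩ => ⟨hb ▸ b.isLt, hb ▸ hd⟩, fun ⟨h, hd⟩ => ⟨⟨_, h⟩, rfl, hd⟩⟩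
  rw [rank_eq_card_nonzero_rows _ fun a a' b ha ha' => by
      rw [cutShift_pow_apply_ne_zero_iff] at ha ha'
      omega,
    Nat.card_congr (Equiv.subtypeEquivRight hrow), Nat.card_eq_fintype_card, Fintype.card_subtype,
    card_filter, card_filter,
    ← Fin.sum_univ_eq_sum_range (fun a => if a + k < n ∧ _ then 1 else 0)]

theorem typeDRep_pow_submatrix [CommRing R] (k : ℕ) :
    (typeDRep R n J ^ k).submatrix (sumEquivTwoMul n) (sumEquivTwoMul n) =
      fromBlocks (cutShift R n J ^ k) 0 0 ((-(cutShift R n J)ᵀ) ^ k) := by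
  have hX : (typeDRep R n J).submatrix (sumEquivTwoMul n) (sumEquivTwoMul n) =
      fromBlocks (cutShift R n J) 0 0 (-(cutShift R n J)ᵀ) := by
    ext (i | i) (j | j) <;> simp [sumEquivTwoMul, typeDRep, cutShift] <;> grind
  rw [← fromBlocks_zero_zero_pow, ← hX]
  simpa [coe_reindexAlgEquiv] using
    map_pow (reindexAlgEquiv R R (sumEquivTwoMul n).symm) (typeDRep R n J) k

theorem typeDRep_pow_self [CommRing R] : typeDRep R n J ^ n = 0 := by
  have h : (typeDRep R n J ^ n).submatrix (sumEquivTwoMul n) (sumEquivTwoMul n) = 0 := by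
    rw [typeDRep_pow_submatrix]
    ext (i | i) (j | j) <;> simp [neg_transpose_pow_apply, cutShift_pow_self]
  simpa using congrArg (fun M => M.submatrix (sumEquivTwoMul n).symm (sumEquivTwoMul n).symm) h

theorem rank_typeDRep_pow (k : ℕ) :
    (typeDRep K n J ^ k).rank = 2 * (cutShift K n J ^ k).rank := by
  rw [← rank_submatrix _ (sumEquivTwoMul n) (sumEquivTwoMul n), typeDRep_pow_submatrix,
    rank_fromBlocks_zero_zero_of_colMonomial, rank_neg_transpose_pow, two_mul]
  · intro a a' b ha ha'
    rw [cutShift_pow_apply_ne_zero_iff] at ha ha'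
    omega
  · intro a a' b ha ha'
    rw [neg_transpose_pow_apply] at ha ha'
    have hb := right_ne_zero_of_mul ha
    have hb' := right_ne_zero_of_mul ha'
    rw [cutShift_pow_apply_ne_zero_iff] at hb hb'
    omega

end CutShift

section Counting

theorem sum_range_eq_sum_Icc_sum_Ico {M : Type*} [AddCommMonoid M] (f : ℕ → M) {d : ℕ → ℕ}
    {r : ℕ} (h0 : d 0 = 0) (hd : MonotoneOn d (Set.Iic r)) :
    ∑ a ∈ range (d r), f a = ∑ i ∈ Icc 1 r, ∑ a ∈ Ico (d (i - 1)) (d i), f a := by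
  induction r with
  | zero => simp [h0]
  | succ r ih =>
    rw [sum_Icc_succ_top (by omega), ← ih (hd.mono (Set.Iic_subset_Iic.2 r.le_succ)),
      Nat.add_sub_cancel, sum_range_add_sum_Ico _ (hd (by simp) (by simp) r.le_succ)]

theorem card_filter_Ico_add_lt (x y k : ℕ) :
    ((Ico x y).filter fun a => a + k < y).card = y - x - k := by
  rw [show (Ico x y).filter (fun a => a + k < y) = Ico x (y - k) by ext; simp; omega]
  simp; omega

variable {d : ℕ → ℕ} {r : ℕ}

theorem disjoint_Ioc_image_iff (hd : StrictMonoOn d (Set.Iic r)) {i a k : ℕ}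
    (hi : i ∈ Icc 1 r) (ha : a ∈ Ico (d (i - 1)) (d i)) :
    (a + k < d r ∧ Disjoint (Ioc a (a + k)) ((Icc 1 r).image d)) ↔ a + k < d i := by
  rw [mem_Icc] at hi
  rw [mem_Ico] at ha
  constructor
  · rintro ⟨-, hdisj⟩
    by_contra! h
    exact disjoint_left.1 hdisj (mem_Ioc.2 ⟨ha.2, h⟩) (mem_image_of_mem d (mem_Icc.2 hi))
  · intro h
    refine ⟨h.trans_le (hd.monotoneOn (by simp; omega) (by simp) hi.2), ?_⟩
    rw [disjoint_left]
    rintro j hj hjd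
    obtain ⟨i', hi', rfl⟩ := mem_image.1 hjd
    rw [mem_Ioc] at hj
    rw [mem_Icc] at hi'
    have h1 := (hd.lt_iff_lt (by simp; omega) (by simp; omega)).1 (ha.1.trans_lt hj.1)
    have h2 := (hd.lt_iff_lt (by simp; omega) (by simp; omega)).1 (hj.2.trans_lt h)
    omega

theorem card_filter_range_disjoint_Ioc (hd : StrictMonoOn d (Set.Iic r)) (h0 : d 0 = 0)
    (k : ℕ) :
    ((range (d r)).filter fun a =>
        a + k < d r ∧ Disjoint (Ioc a (a + k)) ((Icc 1 r).image d)).card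
      = ∑ i ∈ Icc 1 r, (d i - d (i - 1) - k) := by
  rw [card_filter, sum_range_eq_sum_Icc_sum_Ico _ h0 hd.monotoneOn]
  refine sum_congr rfl fun i hi => ?_
  rw [← card_filter_Ico_add_lt, card_filter]
  exact sum_congr rfl fun a ha => if_congr (disjoint_Ioc_image_iff hd hi ha) rfl rfl

end Counting

theorem stmt_9_general (n r : ℕ)
    (d : ℕ → ℕ) (h0 : d 0 = 0)
    (hmono : ∀ i, i < r → d i < d (i + 1))
    (hdn : d r ≤ n)
    (J : Finset ℕ) (hJ : J = (Finset.Icc 1 r).image d)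
    (hn2 : n ∈ J)
    (X : Matrix (Fin (2 * n)) (Fin (2 * n)) ℚ)
    (hX : X = Matrix.of fun k l : Fin (2 * n) =>
      (if l.val = k.val + 1 ∧ 1 ≤ l.val ∧ l.val ≤ n - 1 ∧ l.val ∉ J then (1 : ℚ) else 0)
        - (if k.val = l.val + 1 ∧ n + 1 ≤ k.val ∧ k.val ≤ 2 * n - 1 ∧ (k.val - n) ∉ J
            then (1 : ℚ) else 0))
    (D : Multiset ℕ) (hD : D = (Finset.Icc 1 r).val.map fun i => d i - d (i - 1))
    (P : Multiset ℕ) (hP : P = D + D) :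
    IsNilpotent X ∧ ∀ k : ℕ, (X ^ k).rank = (P.map fun p => p - k).sum := by
  have hd : StrictMonoOn d (Set.Iic r) := strictMonoOn_Iic_of_lt_succ hmono
  have hdr : d r = n := by
    obtain ⟨i, hi, rfl⟩ := mem_image.1 (hJ ▸ hn2)
    have hir : i ≤ r := (mem_Icc.1 hi).2
    exact le_antisymm hdn (hd.monotoneOn hir (Set.mem_Iic.2 le_rfl) hir)
  change X = typeDRep ℚ n J at hX
  subst hX hP hD hdr hJ
  refine ⟨⟨d r, typeDRep_pow_self⟩, fun k => ?_⟩
  rw [rank_typeDRep_pow, rank_cutShift_pow, card_filter_range_disjoint_Ioc hd h0, Multiset.map_add,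
    Multiset.sum_add, Multiset.map_map, two_mul]
  rfl

/-- Type `D_n`, case `n-1 ∈ J` and `n ∈ J`: the representative
`X_J = Σ_{i ∈ {1,...,n-1} \ J} (E_{i,i+1} - E_{n+i+1,n+i})`
(1-based indices, realized here 0-based on `Fin (2n)`) is nilpotent with Jordan type the
partition `[(d_r - d_{r-1})² ... (d_2 - d_1)² d_1²]`. -/
theorem stmt_9 (n r : ℕ) (hn : 4 ≤ n) (hr : 1 ≤ r)
    (d : ℕ → ℕ) (h0 : d 0 = 0)
    (hmono : ∀ i, i < r → d i < d (i + 1))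
    (hdn : d r ≤ n)
    (J : Finset ℕ) (hJ : J = (Finset.Icc 1 r).image d)
    (hn1 : (n - 1) ∈ J) (hn2 : n ∈ J)
    (X : Matrix (Fin (2 * n)) (Fin (2 * n)) ℚ)
    (hX : X = Matrix.of fun k l : Fin (2 * n) =>
      (if l.val = k.val + 1 ∧ 1 ≤ l.val ∧ l.val ≤ n - 1 ∧ l.val ∉ J then (1 : ℚ) else 0)
        - (if k.val = l.val + 1 ∧ n + 1 ≤ k.val ∧ k.val ≤ 2 * n - 1 ∧ (k.val - n) ∉ J
            then (1 : ℚ) else 0))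
    (D : Multiset ℕ) (hD : D = (Finset.Icc 1 r).val.map fun i => d i - d (i - 1))
    (P : Multiset ℕ) (hP : P = D + D) :
    IsNilpotent X ∧ ∀ k : ℕ, (X ^ k).rank = (P.map fun p => p - k).sum :=
  stmt_9_general n r d h0 hmono hdn J hJ hn2 X hX D hD P hP
end

section
/- Both n - 1 ∉ J and n ∉ J hold if and only if the value 1 occurs in the multiset P_D(J) with odd multiplicity. -/
/-! Every multiset of the form `s + s` or `b ::ₘ b ::ₘ (s + s)` has only even multiplicities,
so `1` can have odd multiplicity only in the first case, where `P_D(J)` has the one extra part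
`1` next to `2 (n - d_r) - 1`; that part is at least `3`, because `d_r ∈ J` and `d_r ≤ n` force
`d_r ≤ n - 2`. -/

namespace Multiset

variable {α : Type*} [DecidableEq α]

theorem even_count_add_self (s : Multiset α) (a : α) : Even ((s + s).count a) := by
  rw [count_add]
  exact ⟨_, rfl⟩

theorem even_count_cons_cons_add_self (s : Multiset α) (a b : α) :
    Even ((b ::ₘ b ::ₘ (s + s)).count a) := by
  rw [← cons_add, ← add_cons]
  exact even_count_add_self _ a

theorem odd_count_cons_cons_add_self {a b : α} (s : Multiset α) (hb : b ≠ a) :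
    Odd ((b ::ₘ a ::ₘ (s + s)).count a) := by
  rw [count_cons_of_ne hb.symm, count_cons_self, count_add, ← two_mul]
  exact odd_two_mul_add_one _

end Multiset

theorem stmt_13_general (n r : ℕ) (hr : 1 ≤ r)
    (d : ℕ → ℕ)
    (hdn : d r ≤ n)
    (J : Finset ℕ) (hJ : J = (Finset.Icc 1 r).image d)
    (D : Multiset ℕ)
    (D' : Multiset ℕ)
    (P : Multiset ℕ)
    (hP : P = if (n - 1) ∉ J ∧ n ∉ J then (2 * (n - d r) - 1) ::ₘ 1 ::ₘ (D + D)
      else if (n - 1) ∈ J ∧ n ∈ J then D + D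
      else (n - d (r - 1)) ::ₘ (n - d (r - 1)) ::ₘ (D' + D')) :
    ((n - 1) ∉ J ∧ n ∉ J) ↔ Odd (P.count 1) := by
  by_cases hc : (n - 1) ∉ J ∧ n ∉ J
  · have hdr : d r ∈ J := hJ ▸ Finset.mem_image_of_mem d (Finset.mem_Icc.2 ⟨hr, le_rfl⟩)
    have hlast : 2 * (n - d r) - 1 ≠ 1 := by
      have h1 : d r ≠ n - 1 := fun h => hc.1 (h ▸ hdr)
      have h2 : d r ≠ n := fun h => hc.2 (h ▸ hdr)
      omega
    rw [hP, if_pos hc]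
    exact iff_of_true hc (Multiset.odd_count_cons_cons_add_self _ hlast)
  · rw [hP, if_neg hc, ← Nat.not_even_iff_odd]
    refine iff_of_false hc (not_not.2 ?_)
    split
    · exact Multiset.even_count_add_self _ _
    · exact Multiset.even_count_cons_cons_add_self _ _ _

/-- Type `D_n`: `n-1 ∉ J` and `n ∉ J` hold iff the value `1` occurs in the multiset
`P_D(J)` with odd multiplicity. -/
theorem stmt_13 (n r : ℕ) (hn : 4 ≤ n) (hr : 1 ≤ r)
    (d : ℕ → ℕ) (h0 : d 0 = 0)
    (hmono : ∀ i, i < r → d i < d (i + 1))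
    (hdn : d r ≤ n)
    (J : Finset ℕ) (hJ : J = (Finset.Icc 1 r).image d)
    (D : Multiset ℕ) (hD : D = (Finset.Icc 1 r).val.map fun i => d i - d (i - 1))
    (D' : Multiset ℕ) (hD' : D' = (Finset.Icc 1 (r - 1)).val.map fun i => d i - d (i - 1))
    (P : Multiset ℕ)
    (hP : P = if (n - 1) ∉ J ∧ n ∉ J then (2 * (n - d r) - 1) ::ₘ 1 ::ₘ (D + D)
      else if (n - 1) ∈ J ∧ n ∈ J then D + D
      else (n - d (r - 1)) ::ₘ (n - d (r - 1)) ::ₘ (D' + D')) :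
    ((n - 1) ∉ J ∧ n ∉ J) ↔ Odd (P.count 1) :=
  stmt_13_general n r hr d hdn J hJ D D' P hP
end

section
/- The following are equivalent: (a) n - 1 ∉ J, n ∉ J, and every element of J is even; (b) in the multiset P_D(J), the value 1 occurs with multiplicity exactly 1, there is exactly one odd value greater than 1 and it occurs with multiplicity 1, and every even value occurs with even multiplicity. (This is the combinatorial form, in type D_n, of the statement that Z(J) is the full center Z exactly when P_D(J) has this shape.) -/
/-! When `n - 1 ∉ J` and `n ∉ J`, `P_D(J) = o ::ₘ 1 ::ₘ (D + D)` with `o = 2 (n - d_r) - 1 ≥ 3`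
odd, so it has the required shape exactly when every difference `d_i - d_{i-1}` is even, i.e.
(telescoping from `d_0 = 0`) when every `d_i` is even. In the two other cases `P_D(J)` has the
form `s + s`, so `1` occurs in it with even multiplicity. -/

/-- The shape of `P_D(J)` for which `Z(J)` is the full center `Z`. -/
def IsFullCenterShape (P : Multiset ℕ) : Prop :=
  P.count 1 = 1 ∧ (P.filter fun v => Odd v ∧ 1 < v).card = 1 ∧
    ∀ v : ℕ, Even v → Even (P.count v)

theorem not_isFullCenterShape_add_self (s : Multiset ℕ) : ¬ IsFullCenterShape (s + s) := by
  rintro ⟨hone, -⟩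
  rw [Multiset.count_add] at hone
  omega

theorem isFullCenterShape_cons_one_cons_add_self_iff (o : ℕ) (s : Multiset ℕ) :
    IsFullCenterShape (o ::ₘ 1 ::ₘ (s + s)) ↔ Odd o ∧ 1 < o ∧ ∀ x ∈ s, Even x := by
  simp only [IsFullCenterShape, Multiset.count_cons, Multiset.count_add, Multiset.filter_cons,
    Multiset.filter_add, Multiset.card_add]
  constructor
  · rintro ⟨hone, hodd, -⟩
    have h1 : ¬ (Odd 1 ∧ 1 < 1) := fun h => lt_irrefl 1 h.2
    by_cases ho : Odd o ∧ 1 < o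
    · simp only [if_pos ho, if_neg h1, Multiset.card_singleton, Multiset.card_zero] at hodd
      have hF : (s.filter fun v => Odd v ∧ 1 < v) = 0 := Multiset.card_eq_zero.mp (by omega)
      refine ⟨ho.1, ho.2, fun x hx => Nat.not_odd_iff_even.mp fun hx' => ?_⟩
      have hx1 : x ≠ 1 := by
        rintro rfl
        have := Multiset.count_pos.mpr hx
        omega
      exact Multiset.filter_eq_nil.mp hF x hx ⟨hx', lt_of_le_of_ne hx'.pos hx1.symm⟩
    · simp only [if_neg ho, if_neg h1, Multiset.card_zero] at hodd
      omega
  · rintro ⟨hodd, hgt, heven⟩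
    have hs1 : 1 ∉ s := fun h => Nat.not_even_one (heven 1 h)
    refine ⟨by simp [hgt.ne, hs1], ?_, fun v hv => ?_⟩
    · have hs : (s.filter fun v => Odd v ∧ 1 < v) = 0 :=
        Multiset.filter_eq_nil.mpr fun x hx hx' => Nat.not_even_iff_odd.mpr hx'.1 (heven x hx)
      simp [hodd, hgt, hs]
    · have hv1 : v ≠ 1 := by rintro rfl; exact Nat.not_even_one hv
      have hvo : v ≠ o := by rintro rfl; exact Nat.not_even_iff_odd.mpr hodd hv
      simp [hv1, hvo]

theorem forall_even_iff_forall_even_sub_pred {d : ℕ → ℕ} {r : ℕ} (h0 : Even (d 0))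
    (hmono : ∀ i < r, d i ≤ d (i + 1)) :
    (∀ i ∈ Finset.Icc 1 r, Even (d i)) ↔ ∀ i ∈ Finset.Icc 1 r, Even (d i - d (i - 1)) := by
  simp only [Finset.mem_Icc]
  constructor
  · intro heven i ⟨hi1, hir⟩
    have hprev : Even (d (i - 1)) := by
      rcases Nat.eq_zero_or_pos (i - 1) with h | h
      · exact h ▸ h0
      · exact heven (i - 1) ⟨h, by omega⟩
    exact (heven i ⟨hi1, hir⟩).tsub hprev
  · intro hstep
    have heven : ∀ i ≤ r, Even (d i) := by
      intro i hir
      induction i with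
      | zero => exact h0
      | succ k ih =>
        have hk := hstep (k + 1) ⟨by omega, hir⟩
        rw [Nat.add_sub_cancel, Nat.even_sub (hmono k hir)] at hk
        exact hk.mpr (ih (by omega))
    exact fun i hi => heven i hi.2

theorem stmt_14_general (n r : ℕ) (hr : 1 ≤ r)
    (d : ℕ → ℕ) (h0 : d 0 = 0)
    (hmono : ∀ i, i < r → d i < d (i + 1))
    (hdn : d r ≤ n)
    (J : Finset ℕ) (hJ : J = (Finset.Icc 1 r).image d)
    (D : Multiset ℕ) (hD : D = (Finset.Icc 1 r).val.map fun i => d i - d (i - 1))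
    (D' : Multiset ℕ)
    (P : Multiset ℕ)
    (hP : P = if (n - 1) ∉ J ∧ n ∉ J then (2 * (n - d r) - 1) ::ₘ 1 ::ₘ (D + D)
      else if (n - 1) ∈ J ∧ n ∈ J then D + D
      else (n - d (r - 1)) ::ₘ (n - d (r - 1)) ::ₘ (D' + D')) :
    ((n - 1) ∉ J ∧ n ∉ J ∧ ∀ j ∈ J, Even j) ↔
      (P.count 1 = 1 ∧ (P.filter fun v => Odd v ∧ 1 < v).card = 1 ∧
        ∀ v : ℕ, Even v → Even (P.count v)) := by
  change _ ↔ IsFullCenterShape P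
  by_cases hA : (n - 1) ∉ J ∧ n ∉ J
  · have hdr : d r + 2 ≤ n := by
      have hdrJ : d r ∈ J := hJ ▸ Finset.mem_image_of_mem d (Finset.mem_Icc.mpr ⟨hr, le_rfl⟩)
      have : d r ≠ n - 1 := fun h => hA.1 (h ▸ hdrJ)
      have : d r ≠ n := fun h => hA.2 (h ▸ hdrJ)
      omega
    have hJeven : (∀ j ∈ J, Even j) ↔ ∀ x ∈ D, Even x := by
      rw [hJ, hD, Finset.forall_mem_image, Multiset.forall_mem_map_iff]
      exact forall_even_iff_forall_even_sub_pred (by simp [h0]) fun i hi => (hmono i hi).le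
    rw [hP, if_pos hA, isFullCenterShape_cons_one_cons_add_self_iff, hJeven]
    have hodd : Odd (2 * (n - d r) - 1) := ⟨n - d r - 1, by omega⟩
    have hgt : 1 < 2 * (n - d r) - 1 := by omega
    simp only [hA, hodd, hgt, not_false_eq_true, true_and]
  · have hdouble : ∃ s, P = s + s := by
      rw [hP, if_neg hA]
      split_ifs
      · exact ⟨D, rfl⟩
      · exact ⟨_ ::ₘ D', by rw [Multiset.cons_add, Multiset.add_cons]⟩
    obtain ⟨s, rfl⟩ := hdouble
    exact iff_of_false (fun h => hA ⟨h.1, h.2.1⟩) (not_isFullCenterShape_add_self s)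

/-- Type `D_n`: the conditions (a) `n-1 ∉ J`, `n ∉ J`, and every element of `J` is even,
and (b) in `P_D(J)` the value 1 occurs with multiplicity exactly 1, there is exactly one
odd value greater than 1 and it occurs with multiplicity 1, and every even value occurs
with even multiplicity, are equivalent. -/
theorem stmt_14 (n r : ℕ) (hn : 4 ≤ n) (hr : 1 ≤ r)
    (d : ℕ → ℕ) (h0 : d 0 = 0)
    (hmono : ∀ i, i < r → d i < d (i + 1))
    (hdn : d r ≤ n)
    (J : Finset ℕ) (hJ : J = (Finset.Icc 1 r).image d)
    (D : Multiset ℕ) (hD : D = (Finset.Icc 1 r).val.map fun i => d i - d (i - 1))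
    (D' : Multiset ℕ) (hD' : D' = (Finset.Icc 1 (r - 1)).val.map fun i => d i - d (i - 1))
    (P : Multiset ℕ)
    (hP : P = if (n - 1) ∉ J ∧ n ∉ J then (2 * (n - d r) - 1) ::ₘ 1 ::ₘ (D + D)
      else if (n - 1) ∈ J ∧ n ∈ J then D + D
      else (n - d (r - 1)) ::ₘ (n - d (r - 1)) ::ₘ (D' + D')) :
    ((n - 1) ∉ J ∧ n ∉ J ∧ ∀ j ∈ J, Even j) ↔
      (P.count 1 = 1 ∧ (P.filter fun v => Odd v ∧ 1 < v).card = 1 ∧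
        ∀ v : ℕ, Even v → Even (P.count v)) :=
  stmt_14_general n r hr d h0 hmono hdn J hJ D hD D' P hP
end

section
/- Define z(J) ∈ {1, 2, 4} by: z(J) = 4 if n-1 ∉ J, n ∉ J, and every element of J is even; z(J) = 2 if either (n-1 ∉ J, n ∉ J, and some element of J is odd) or (exactly one of n-1, n is in J, every j ∈ J with j < n-1 is even, and n is even); and z(J) = 1 otherwise. Then for nonempty subsets J, J' of {1, ..., n}: if P_D(J) = P_D(J') as multisets, then z(J) = z(J'). (That is, in type D_n, the order of the fiber group Z(J) of Graham's quotient map depends only on the nilpotent orbit containing the T_ad-orbit τ_J.) -/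
/-- The set `J = {d 1, ..., d r}` for a strictly increasing `d` with `d 0 = 0`. -/
def grahamJset (r : ℕ) (d : ℕ → ℕ) : Finset ℕ := (Finset.Icc 1 r).image d

/-- The type `D_n` unreduced partition `P_D(J)` attached to `J = {d 1 < ... < d r}`. -/
def grahamPD (n r : ℕ) (d : ℕ → ℕ) : Multiset ℕ :=
  if (n - 1) ∉ grahamJset r d ∧ n ∉ grahamJset r d then
    (2 * (n - d r) - 1) ::ₘ 1 ::ₘ
      (((Finset.Icc 1 r).val.map fun i => d i - d (i - 1)) +
        (Finset.Icc 1 r).val.map fun i => d i - d (i - 1))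
  else if (n - 1) ∈ grahamJset r d ∧ n ∈ grahamJset r d then
    ((Finset.Icc 1 r).val.map fun i => d i - d (i - 1)) +
      (Finset.Icc 1 r).val.map fun i => d i - d (i - 1)
  else
    (n - d (r - 1)) ::ₘ (n - d (r - 1)) ::ₘ
      (((Finset.Icc 1 (r - 1)).val.map fun i => d i - d (i - 1)) +
        (Finset.Icc 1 (r - 1)).val.map fun i => d i - d (i - 1))

/-- The order `z(J) ∈ {1, 2, 4}` of the fiber group `Z(J)` in type `D_n`. -/
def grahamZ (n r : ℕ) (d : ℕ → ℕ) : ℕ :=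
  if (n - 1) ∉ grahamJset r d ∧ n ∉ grahamJset r d ∧ ∀ j ∈ grahamJset r d, Even j then 4
  else if ((n - 1) ∉ grahamJset r d ∧ n ∉ grahamJset r d ∧ ∃ j ∈ grahamJset r d, Odd j) ∨
      ((((n - 1) ∈ grahamJset r d ∧ n ∉ grahamJset r d) ∨
          ((n - 1) ∉ grahamJset r d ∧ n ∈ grahamJset r d)) ∧
        (∀ j ∈ grahamJset r d, j < n - 1 → Even j) ∧ Even n) then 2
  else 1

/-!
`z(J)` can be read off from `P = P_D(J)`. The multiplicity of `1` in `P` is odd exactly when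
`n - 1, n ∉ J`: then `P = {2(n - d_r) - 1, 1} + 2·G` with `G` the gaps `d_i - d_{i-1}` and
`2(n - d_r) - 1 ≥ 3`, and `J` consists of even numbers iff all gaps are even, i.e. iff `P` has
exactly two odd parts. Otherwise `P = 2·Q` is a doubled multiset and `z(J) = 2` iff all parts are
even: if `n - 1, n ∈ J` the last gap is `1`, and if exactly one of them lies in `J` then `Q`
consists of `n - d_{r-1}` and the gaps of `d_1 < ⋯ < d_{r-1}`, which are all even iff `n` and all
elements of `J` below `n - 1` are even.
-/

def grahamGaps (r : ℕ) (d : ℕ → ℕ) : Multiset ℕ :=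
  (Finset.Icc 1 r).val.map fun i => d i - d (i - 1)

def zOfPartition (P : Multiset ℕ) : ℕ :=
  if Odd (P.count 1) then (if P.countP Odd = 2 then 4 else 2)
  else if ∀ x ∈ P, Even x then 2 else 1

lemma zOfPartition_add_self (G : Multiset ℕ) :
    zOfPartition (G + G) = if ∀ x ∈ G, Even x then 2 else 1 := by
  have hcount : ¬ Odd ((G + G).count 1) := by
    rw [Multiset.count_add, Nat.not_odd_iff_even]
    exact Even.add_self _
  simp only [zOfPartition, hcount, if_false, Multiset.mem_add, or_self]

lemma zOfPartition_cons_cons_one_add_self {a : ℕ} (ha : Odd a) (ha1 : a ≠ 1)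
    (G : Multiset ℕ) :
    zOfPartition (a ::ₘ 1 ::ₘ (G + G)) = if ∀ x ∈ G, Even x then 4 else 2 := by
  have hcount : Odd ((a ::ₘ 1 ::ₘ (G + G)).count 1) := by
    rw [Multiset.count_cons_of_ne ha1.symm, Multiset.count_cons_self, Multiset.count_add]
    exact (Even.add_self _).add_one
  have hodd : (a ::ₘ 1 ::ₘ (G + G)).countP Odd = 2 * G.countP Odd + 2 := by
    simp only [Multiset.countP_cons_of_pos _ ha, Multiset.countP_cons_of_pos _ odd_one,
      Multiset.countP_add]
    ring
  have hall : G.countP Odd = 0 ↔ ∀ x ∈ G, Even x := by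
    simp [Multiset.countP_eq_zero]
  simp only [zOfPartition, hcount, if_true, hodd,
    show 2 * G.countP Odd + 2 = 2 ↔ G.countP Odd = 0 by omega, hall]

variable {n r : ℕ} {d : ℕ → ℕ}

lemma forall_even_grahamGaps_iff (h0 : d 0 = 0) (hd : MonotoneOn d (Set.Iic r)) :
    (∀ x ∈ grahamGaps r d, Even x) ↔ ∀ i ≤ r, Even (d i) := by
  simp only [grahamGaps, Multiset.forall_mem_map_iff, Finset.mem_val, Finset.mem_Icc]
  constructor
  · intro h i
    induction i with
    | zero => simp [h0]
    | succ i ih =>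
      intro hi
      have hle : d i ≤ d (i + 1) := hd (by simp; omega) (by simpa using hi) (by omega)
      simpa [Nat.even_sub hle, ih (by omega)] using h (i + 1) ⟨by omega, hi⟩
  · rintro h i ⟨hi1, hir⟩
    have hle : d (i - 1) ≤ d i := hd (by simp; omega) (by simpa using hir) (by omega)
    rw [Nat.even_sub hle]
    exact iff_of_true (h i hir) (h (i - 1) (by omega))

lemma forall_even_grahamJset_iff (h0 : d 0 = 0) :
    (∀ j ∈ grahamJset r d, Even j) ↔ ∀ i ≤ r, Even (d i) := by
  simp only [grahamJset, Finset.forall_mem_image, Finset.mem_Icc]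
  constructor
  · intro h i hi
    rcases Nat.eq_zero_or_pos i with rfl | hi0
    · simp [h0]
    · exact h ⟨hi0, hi⟩
  · exact fun h i hi => h i hi.2

lemma le_of_mem_grahamJset (hd : MonotoneOn d (Set.Iic r)) {j : ℕ}
    (hj : j ∈ grahamJset r d) : j ≤ d r := by
  obtain ⟨i, hi, rfl⟩ := Finset.mem_image.mp hj
  exact hd (by simpa using (Finset.mem_Icc.mp hi).2) (by simp) (Finset.mem_Icc.mp hi).2

lemma grahamJset_eq_insert (hr : 1 ≤ r) :
    grahamJset r d = insert (d r) (grahamJset (r - 1) d) := by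
  ext j
  simp only [grahamJset, Finset.mem_insert, Finset.mem_image, Finset.mem_Icc]
  constructor
  · rintro ⟨i, ⟨hi1, hir⟩, rfl⟩
    rcases Nat.lt_or_ge i r with h | h
    · exact Or.inr ⟨i, ⟨hi1, by omega⟩, rfl⟩
    · exact Or.inl (by rw [show i = r by omega])
  · rintro (rfl | ⟨i, ⟨hi1, hir⟩, rfl⟩)
    · exact ⟨r, ⟨hr, le_rfl⟩, rfl⟩
    · exact ⟨i, ⟨hi1, by omega⟩, rfl⟩

lemma grahamZ_eq_zOfPartition_of_notMem_of_notMem (hr : 1 ≤ r) (h0 : d 0 = 0)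
    (hd : MonotoneOn d (Set.Iic r)) (hdn : d r ≤ n) (h1 : n - 1 ∉ grahamJset r d)
    (h2 : n ∉ grahamJset r d) : grahamZ n r d = zOfPartition (grahamPD n r d) := by
  have hdr : d r ∈ grahamJset r d := by simp [grahamJset_eq_insert hr]
  have hgap : d r + 2 ≤ n := by
    have : d r ≠ n - 1 := fun h => h1 (h ▸ hdr)
    have : d r ≠ n := fun h => h2 (h ▸ hdr)
    omega
  rw [show grahamPD n r d = (2 * (n - d r) - 1) ::ₘ 1 ::ₘ (grahamGaps r d + grahamGaps r d)
      from if_pos ⟨h1, h2⟩,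
    zOfPartition_cons_cons_one_add_self (Nat.odd_iff.mpr (by omega)) (by omega)]
  simp only [forall_even_grahamGaps_iff h0 hd, ← forall_even_grahamJset_iff h0]
  by_cases hev : ∀ j ∈ grahamJset r d, Even j
  · rw [if_pos hev, grahamZ, if_pos ⟨h1, h2, hev⟩]
  · have hodd : ∃ j ∈ grahamJset r d, Odd j := by simpa [← Nat.not_even_iff_odd] using hev
    rw [if_neg hev, grahamZ, if_neg fun h => hev h.2.2, if_pos (Or.inl ⟨h1, h2, hodd⟩)]

lemma grahamZ_eq_zOfPartition_of_mem_of_mem (hr : 1 ≤ r) (hd : StrictMonoOn d (Set.Iic r))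
    (hdn : d r ≤ n) (h1 : n - 1 ∈ grahamJset r d) (h2 : n ∈ grahamJset r d) :
    grahamZ n r d = zOfPartition (grahamPD n r d) := by
  have hdr : d r = n := le_antisymm hdn (le_of_mem_grahamJset hd.monotoneOn h2)
  have hlt : d (r - 1) < d r := hd (by simp) (by simp) (by omega)
  have hdr1 : d (r - 1) = n - 1 := by
    rw [grahamJset_eq_insert hr, Finset.mem_insert] at h1
    rcases h1 with h1 | h1
    · omega
    · have := le_of_mem_grahamJset (hd.monotoneOn.mono (Set.Iic_subset_Iic.mpr (by omega))) h1
      omega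
  have hone : 1 ∈ grahamGaps r d :=
    Multiset.mem_map.mpr ⟨r, by simp [hr], show d r - d (r - 1) = 1 by omega⟩
  rw [show grahamPD n r d = grahamGaps r d + grahamGaps r d from
      (if_neg fun h => h.1 h1).trans (if_pos ⟨h1, h2⟩),
    zOfPartition_add_self, if_neg fun h => Nat.not_even_one (h 1 hone)]
  simp [grahamZ, h1, h2]

lemma grahamZ_eq_zOfPartition_of_mem_xor (hr : 1 ≤ r) (h0 : d 0 = 0)
    (hd : StrictMonoOn d (Set.Iic r)) (hdn : d r ≤ n)
    (hx : (n - 1 ∈ grahamJset r d ∧ n ∉ grahamJset r d) ∨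
      (n - 1 ∉ grahamJset r d ∧ n ∈ grahamJset r d)) :
    grahamZ n r d = zOfPartition (grahamPD n r d) := by
  have hd' : MonotoneOn d (Set.Iic (r - 1)) :=
    hd.monotoneOn.mono (Set.Iic_subset_Iic.mpr (Nat.sub_le r 1))
  have hlt : d (r - 1) < d r := hd (by simp) (by simp) (by omega)
  have hJ : grahamJset r d = insert (d r) (grahamJset (r - 1) d) := grahamJset_eq_insert hr
  have htop : n - 1 ≤ d r := by
    rcases hx with ⟨h, -⟩ | ⟨-, h⟩ <;> have := le_of_mem_grahamJset hd.monotoneOn h <;> omega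
  have hbelow : ∀ j ∈ grahamJset (r - 1) d, j < n - 1 := by
    intro j hj
    have hjr : j < d r := (le_of_mem_grahamJset hd' hj).trans_lt hlt
    have hjJ : j ∈ grahamJset r d := hJ ▸ Finset.mem_insert_of_mem hj
    have hrJ : d r ∈ grahamJset r d := hJ ▸ Finset.mem_insert_self _ _
    rcases hx with ⟨-, h⟩ | ⟨h, -⟩
    · have : d r ≠ n := fun e => h (e ▸ hrJ)
      omega
    · have : j ≠ n - 1 := fun e => h (e ▸ hjJ)
      omega
  have hPD : grahamPD n r d = ((n - d (r - 1)) ::ₘ grahamGaps (r - 1) d) +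
      ((n - d (r - 1)) ::ₘ grahamGaps (r - 1) d) := by
    rw [Multiset.cons_add, Multiset.add_cons]
    exact (if_neg (by tauto)).trans (if_neg (by tauto))
  have hZ : (∀ j ∈ grahamJset r d, j < n - 1 → Even j) ↔ ∀ j ∈ grahamJset (r - 1) d, Even j := by
    rw [hJ, Finset.forall_mem_insert]
    simp only [not_lt.mpr htop, false_imp_iff, true_and]
    exact forall₂_congr fun j hj => imp_iff_right (hbelow j hj)
  rw [hPD, zOfPartition_add_self]
  simp only [Multiset.mem_cons, forall_eq_or_imp, forall_even_grahamGaps_iff h0 hd',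
    Nat.even_sub (hlt.le.trans hdn)]
  have hcond : ((Even n ↔ Even (d (r - 1))) ∧ ∀ i ≤ r - 1, Even (d i)) ↔
      (∀ j ∈ grahamJset r d, j < n - 1 → Even j) ∧ Even n := by
    rw [hZ, forall_even_grahamJset_iff h0]
    exact ⟨fun ⟨hn, hev⟩ => ⟨hev, hn.mpr (hev _ le_rfl)⟩,
      fun ⟨hev, hn⟩ => ⟨iff_of_true hn (hev _ le_rfl), hev⟩⟩
  have hnotA : ¬ (n - 1 ∉ grahamJset r d ∧ n ∉ grahamJset r d) := by
    rcases hx with ⟨h, -⟩ | ⟨-, h⟩ <;> simp [h]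
  rw [grahamZ, if_neg fun h => hnotA ⟨h.1, h.2.1⟩]
  congr 1
  exact propext ⟨fun h => h.elim (fun h => absurd ⟨h.1, h.2.1⟩ hnotA) (hcond.mpr ·.2),
    fun h => Or.inr ⟨hx, hcond.mp h⟩⟩

lemma grahamZ_eq_zOfPartition (hr : 1 ≤ r) (h0 : d 0 = 0)
    (hmono : ∀ i, i < r → d i < d (i + 1)) (hdn : d r ≤ n) :
    grahamZ n r d = zOfPartition (grahamPD n r d) := by
  have hd : StrictMonoOn d (Set.Iic r) := strictMonoOn_Iic_of_lt_succ hmono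
  by_cases h1 : n - 1 ∈ grahamJset r d <;> by_cases h2 : n ∈ grahamJset r d
  · exact grahamZ_eq_zOfPartition_of_mem_of_mem hr hd hdn h1 h2
  · exact grahamZ_eq_zOfPartition_of_mem_xor hr h0 hd hdn (Or.inl ⟨h1, h2⟩)
  · exact grahamZ_eq_zOfPartition_of_mem_xor hr h0 hd hdn (Or.inr ⟨h1, h2⟩)
  · exact grahamZ_eq_zOfPartition_of_notMem_of_notMem hr h0 hd.monotoneOn hdn h1 h2

theorem stmt_15_general (n : ℕ)
    (r : ℕ) (hr : 1 ≤ r) (d : ℕ → ℕ) (h0 : d 0 = 0)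
    (hmono : ∀ i, i < r → d i < d (i + 1)) (hdn : d r ≤ n)
    (s : ℕ) (hs : 1 ≤ s) (e : ℕ → ℕ) (h0' : e 0 = 0)
    (hmono' : ∀ i, i < s → e i < e (i + 1)) (hen : e s ≤ n)
    (hPP : grahamPD n r d = grahamPD n s e) :
    grahamZ n r d = grahamZ n s e := by
  rw [grahamZ_eq_zOfPartition hr h0 hmono hdn, grahamZ_eq_zOfPartition hs h0' hmono' hen, hPP]

/-- In type `D_n`, if two sets `J`, `J'` give the same unreduced partition
`P_D(J) = P_D(J')`, then `z(J) = z(J')`: the order of the fiber group of Graham's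
quotient map depends only on the nilpotent orbit. -/
theorem stmt_15 (n : ℕ) (hn : 4 ≤ n)
    (r : ℕ) (hr : 1 ≤ r) (d : ℕ → ℕ) (h0 : d 0 = 0)
    (hmono : ∀ i, i < r → d i < d (i + 1)) (hdn : d r ≤ n)
    (s : ℕ) (hs : 1 ≤ s) (e : ℕ → ℕ) (h0' : e 0 = 0)
    (hmono' : ∀ i, i < s → e i < e (i + 1)) (hen : e s ≤ n)
    (hPP : grahamPD n r d = grahamPD n s e) :
    grahamZ n r d = grahamZ n s e :=
  stmt_15_general n r hr d h0 hmono hdn s hs e h0' hmono' hen hPP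
end

section
/- For every k ≥ 1, the number of integers i with 1 ≤ i ≤ n + 1 - k such that none of i, i+1, ..., i+k-1 belongs to J equals Σ_{p ∈ P(J)} max(p - k, 0). (This identity expresses that the sizes of the Jordan blocks of the matrix X_J = Σ_{i ∉ J} E_{i, i+1} are given by the gaps between consecutive elements of J ∪ {0, n+1}.) -/
/-!
Extend `d` by `d (r + 1) = n + 1`. A window `i, …, i + k - 1` avoids `J` exactly when it fits
strictly between two consecutive terms `d j < i` and `i + k ≤ d (j + 1)`. Inducting on the number
of terms, appending `d (m + 1)` adds exactly the starts in `(d m, d (m + 1) - k]`, and there are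
`d (m + 1) - d m - k` of them in truncated subtraction, i.e. `max (p - k) 0` for the gap `p`.
-/

open Finset

section WindowCount

variable {e : ℕ → ℕ}

def avoidingWindowStarts (e : ℕ → ℕ) (k m : ℕ) : Finset ℕ :=
  (Icc (e 0 + 1) (e m - k)).filter fun i => ∀ t ∈ range k, i + t ∉ (Ico 1 m).image e

theorem avoidingWindowStarts_zero (e : ℕ → ℕ) (k : ℕ) : avoidingWindowStarts e k 0 = ∅ := by
  ext i
  simp only [avoidingWindowStarts, mem_filter, mem_Icc, notMem_empty, iff_false]
  omega

theorem avoidingWindowStarts_succ (he : Monotone e) (k m : ℕ) :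
    avoidingWindowStarts e k (m + 1) =
      avoidingWindowStarts e k m ∪ Icc (e m + 1) (e (m + 1) - k) := by
  have hle : ∀ j ≤ m, e j ≤ e m := fun j hj => he hj
  have hsucc : e m ≤ e (m + 1) := he m.le_succ
  ext i
  simp only [avoidingWindowStarts, mem_union, mem_filter, mem_Icc, mem_range, mem_image, mem_Ico,
    not_exists, not_and]
  constructor
  · rintro ⟨⟨hi0, hik⟩, havoid⟩
    by_cases him : i + k ≤ e m
    · refine Or.inl ⟨⟨hi0, by omega⟩, fun t ht j hj => havoid t ht j ⟨hj.1, by omega⟩⟩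
    · refine Or.inr ⟨?_, hik⟩
      by_contra! hi
      rcases Nat.eq_zero_or_pos m with rfl | hm
      · omega
      · exact havoid (e m - i) (by omega) m ⟨hm, by omega⟩ (by omega)
  · rintro (⟨⟨hi0, hik⟩, havoid⟩ | ⟨hi0, hik⟩)
    · refine ⟨⟨hi0, by omega⟩, fun t ht j hj hji => ?_⟩
      rcases (Nat.lt_succ_iff.1 hj.2).lt_or_eq with hjm | rfl
      · exact havoid t ht j ⟨hj.1, hjm⟩ hji
      · omega
    · refine ⟨⟨by have := hle 0 m.zero_le; omega, hik⟩, fun t ht j hj hji => ?_⟩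
      have := hle j (by omega)
      omega

theorem card_avoidingWindowStarts (he : Monotone e) (k m : ℕ) :
    (avoidingWindowStarts e k m).card = ∑ j ∈ range m, (e (j + 1) - e j - k) := by
  induction m with
  | zero => simp [avoidingWindowStarts_zero]
  | succ m ih =>
    have hdisj : Disjoint (avoidingWindowStarts e k m) (Icc (e m + 1) (e (m + 1) - k)) := by
      refine disjoint_left.2 fun i hi hi' => ?_
      simp only [avoidingWindowStarts, mem_filter, mem_Icc] at hi hi'
      omega
    rw [avoidingWindowStarts_succ he, card_union_of_disjoint hdisj, ih, sum_range_succ,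
      Nat.card_Icc]
    omega

end WindowCount

theorem monotone_ite_le_of_le_succ {α : Type*} [Preorder α] {d : ℕ → α} {r : ℕ} {b : α}
    (hd : ∀ i < r, d i ≤ d (i + 1)) (hdb : d r ≤ b) :
    Monotone fun j => if j ≤ r then d j else b := by
  refine monotone_nat_of_le_succ fun j => ?_
  rcases lt_trichotomy j r with hj | rfl | hj
  · simpa [hj.le, Nat.succ_le_of_lt hj] using hd j hj
  · simpa using hdb
  · simp [hj.not_ge, (hj.trans j.lt_succ_self).not_ge]

theorem stmt_16_general (n r : ℕ)
    (d : ℕ → ℕ) (h0 : d 0 = 0)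
    (hmono : ∀ i, i < r → d i < d (i + 1))
    (hdn : d r ≤ n)
    (J : Finset ℕ) (hJ : J = (Finset.Icc 1 r).image d)
    (P : Multiset ℕ)
    (hP : P = (n + 1 - d r) ::ₘ (Finset.Icc 1 r).val.map fun i => d i - d (i - 1)) :
    ∀ k : ℕ, 1 ≤ k →
      ((Finset.Icc 1 (n + 1 - k)).filter fun i => ∀ t ∈ Finset.range k, (i + t) ∉ J).card =
        (P.map fun p => p - k).sum := by
  intro k _
  set e : ℕ → ℕ := fun j => if j ≤ r then d j else n + 1
  have he : Monotone e :=
    monotone_ite_le_of_le_succ (fun i hi => (hmono i hi).le) (hdn.trans n.le_succ)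
  have hJe : J = (Ico 1 (r + 1)).image e := by
    rw [hJ, Ico_add_one_right_eq_Icc]
    exact image_congr fun j hj => by simp [e, (mem_Icc.1 hj).2]
  have hstarts : ((Icc 1 (n + 1 - k)).filter fun i => ∀ t ∈ range k, i + t ∉ J) =
      avoidingWindowStarts e k (r + 1) := by
    simp [avoidingWindowStarts, e, h0, hJe]
  have hgaps : ∀ j ∈ range r, e (j + 1) - e j - k = d (j + 1) - d (j + 1 - 1) - k := by
    intro j hj
    simp [e, Nat.succ_le_of_lt (mem_range.1 hj), (mem_range.1 hj).le]
  rw [hstarts, card_avoidingWindowStarts he, sum_range_succ, sum_congr rfl hgaps, hP,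
    Multiset.map_cons, Multiset.sum_cons, Multiset.map_map, sum_map_val, range_eq_Ico,
    ← Ico_add_one_right_eq_Icc, sum_Ico_add' (fun i => d i - d (i - 1) - k) 0 r 1]
  simp [e, add_comm]

/-- For every `k ≥ 1`, the number of `i` with `1 ≤ i ≤ n + 1 - k` such that none of
`i, i+1, ..., i+k-1` belongs to `J` equals `Σ_{p ∈ P(J)} max (p - k) 0`, where
`P(J) = [(n+1-d_r) (d_r - d_{r-1}) ... (d_2 - d_1) d_1]`. -/
theorem stmt_16 (n r : ℕ) (hn : 1 ≤ n)
    (d : ℕ → ℕ) (h0 : d 0 = 0)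
    (hmono : ∀ i, i < r → d i < d (i + 1))
    (hdn : d r ≤ n)
    (J : Finset ℕ) (hJ : J = (Finset.Icc 1 r).image d)
    (P : Multiset ℕ)
    (hP : P = (n + 1 - d r) ::ₘ (Finset.Icc 1 r).val.map fun i => d i - d (i - 1)) :
    ∀ k : ℕ, 1 ≤ k →
      ((Finset.Icc 1 (n + 1 - k)).filter fun i => ∀ t ∈ Finset.range k, (i + t) ∉ J).card =
        (P.map fun p => p - k).sum :=
  stmt_16_general n r d h0 hmono hdn J hJ P hP
end
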